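/- arXiv:1612.08848 — 10 statements merged into one kernel-verified Lean document; each statement's English description precedes it below -/
import Mathlib

section
/- Let r be a positive integer and H a complex Hilbert space. Let (z_k) be a sequence in L(ℂ^r, H) converging in norm to ξ ∈ L(ℂ^r, H), and let (e_k) be a sequence of minimal tripotents in L(ℂ^r, H) (i.e., e_k = a_k⊗b_k with unit vectors a_k ∈ ℂ^r, b_k ∈ H) converging in the weak operator topology to e ∈ L(ℂ^r, H). Then the sequence ({e_k, z_k, e_k}) = (e_k z_k* e_k) converges in the weak operator topology to {e, ξ, e} = e ξ* e. -/
/-!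
A rank-one operator `T = x ⊗ y` satisfies `T z* T = tr(z* T) • T`, so `{e_k, z_k, e_k}` is a
scalar multiple of `e_k`. The scalars `tr(z_k* e_k) = ∑ᵢ ⟪z_k bᵢ, e_k bᵢ⟫`, taken over an
orthonormal basis of the finite-dimensional domain, converge because `z_k bᵢ` converges in norm
while `e_k bᵢ` converges weakly and stays bounded. The weak limit `e` is again rank one, since the
vanishing of the minors `⟪T μ, h⟫⟪T μ', h'⟫ - ⟪T μ', h⟫⟪T μ, h'⟫` passes to weak limits, so the
same identity applies to `{e, ξ, e}`.
-/

open ContinuousLinearMap Filter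

/-- The rank-one operator `a ⊗ b : ℂ^r → H`, `μ ↦ ⟨μ, a⟩ b` (inner product linear in the
first variable, i.e. `⟪a, μ⟫` in Mathlib's convention). -/
noncomputable def rankOne {r : ℕ} {H : Type*} [NormedAddCommGroup H] [InnerProductSpace ℂ H]
    (a : EuclideanSpace ℂ (Fin r)) (b : H) : EuclideanSpace ℂ (Fin r) →L[ℂ] H :=
  (innerSL ℂ a).smulRight b

open scoped InnerProductSpace Topology

section

variable {𝕜 E F ι : Type*} [RCLike 𝕜] [NormedAddCommGroup E] [InnerProductSpace 𝕜 E]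
  [NormedAddCommGroup F] [InnerProductSpace 𝕜 F] {l : Filter ι}

theorem tendsto_inner_of_tendsto_of_weakly {u v : ι → E} {u₀ v₀ : E} {C : ℝ}
    (hu : Tendsto u l (𝓝 u₀)) (hv : ∀ h, Tendsto (fun k => ⟪v k, h⟫_𝕜) l (𝓝 ⟪v₀, h⟫_𝕜))
    (hC : ∀ k, ‖v k‖ ≤ C) : Tendsto (fun k => ⟪u k, v k⟫_𝕜) l (𝓝 ⟪u₀, v₀⟫_𝕜) := by
  have h₁ : Tendsto (fun k => ⟪u k - u₀, v k⟫_𝕜) l (𝓝 0) := by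
    rw [tendsto_zero_iff_norm_tendsto_zero]
    refine squeeze_zero (fun _ => norm_nonneg _) (fun k => ?_)
      (by simpa using (tendsto_sub_nhds_zero_iff.2 hu).norm.mul_const C)
    calc ‖⟪u k - u₀, v k⟫_𝕜‖ ≤ ‖u k - u₀‖ * ‖v k‖ := norm_inner_le_norm _ _
      _ ≤ ‖u k - u₀‖ * C := by gcongr; exact hC k
  have h₂ : Tendsto (fun k => ⟪u₀, v k⟫_𝕜) l (𝓝 ⟪u₀, v₀⟫_𝕜) := by
    simpa only [Function.comp_def, inner_conj_symm] using
      (RCLike.continuous_conj.tendsto _).comp (hv u₀)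
  simpa [inner_sub_left] using h₁.add h₂

theorem tendsto_trace_adjoint_comp [FiniteDimensional 𝕜 E] [CompleteSpace E] [CompleteSpace F]
    {z e : ι → E →L[𝕜] F} {z₀ e₀ : E →L[𝕜] F} {C : ℝ} (hz : Tendsto z l (𝓝 z₀))
    (he : ∀ μ h, Tendsto (fun k => ⟪e k μ, h⟫_𝕜) l (𝓝 ⟪e₀ μ, h⟫_𝕜)) (hC : ∀ k, ‖e k‖ ≤ C) :
    Tendsto (fun k => LinearMap.trace 𝕜 E (adjoint (z k) ∘L e k)) l
      (𝓝 (LinearMap.trace 𝕜 E (adjoint z₀ ∘L e₀))) := by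
  let b := stdOrthonormalBasis 𝕜 E
  simp only [LinearMap.trace_eq_sum_inner _ b, coe_coe, comp_apply, adjoint_inner_right]
  refine tendsto_finsetSum _ fun i _ => tendsto_inner_of_tendsto_of_weakly
    (((apply 𝕜 F (b i)).continuous.tendsto z₀).comp hz) (he (b i)) (C := C) fun k => ?_
  simpa [b.norm_eq_one i] using (e k).le_of_opNorm_le (hC k) (b i)

namespace InnerProductSpace

theorem rankOne_comp_adjoint_comp_rankOne [FiniteDimensional 𝕜 E] [CompleteSpace E]
    [CompleteSpace F] (x : F) (y : E) (z : E →L[𝕜] F) :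
    rankOne 𝕜 x y ∘L adjoint z ∘L rankOne 𝕜 x y
      = LinearMap.trace 𝕜 E (adjoint z ∘L rankOne 𝕜 x y) • rankOne 𝕜 x y := by
  rw [comp_rankOne, rankOne_comp_rankOne, trace_rankOne]

theorem inner_rankOne_mul_inner_rankOne_comm (x : F) (y μ μ' : E) (h h' : F) :
    ⟪rankOne 𝕜 x y μ, h⟫_𝕜 * ⟪rankOne 𝕜 x y μ', h'⟫_𝕜
      = ⟪rankOne 𝕜 x y μ', h⟫_𝕜 * ⟪rankOne 𝕜 x y μ, h'⟫_𝕜 := by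
  simp only [inner_left_rankOne_apply]
  ring

theorem exists_eq_rankOne_of_inner_mul_comm [CompleteSpace E] [CompleteSpace F] (T : E →L[𝕜] F)
    (hT : ∀ μ μ' h h', ⟪T μ, h⟫_𝕜 * ⟪T μ', h'⟫_𝕜 = ⟪T μ', h⟫_𝕜 * ⟪T μ, h'⟫_𝕜) :
    ∃ x y, T = rankOne 𝕜 x y := by
  by_cases hT₀ : T = 0
  · exact ⟨0, 0, by simp [hT₀]⟩
  obtain ⟨μ₀, hμ₀⟩ : ∃ μ₀, T μ₀ ≠ 0 := by
    by_contra! h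
    exact hT₀ (ext h)
  set y := T μ₀ with hy'
  have hy : (‖y‖ : 𝕜) ≠ 0 := by exact_mod_cast (norm_pos_iff.2 hμ₀).ne'
  -- `T μ` lies on the line through `y`: it equals `(⟪y, T μ⟫ / ‖y‖²) • y`.
  refine ⟨(‖y‖ ^ 2 : 𝕜)⁻¹ • y, adjoint T y, ext fun μ => ext_inner_right 𝕜 fun h => ?_⟩
  have := hT μ μ₀ h y
  rw [← hy', inner_self_eq_norm_sq_to_K] at this
  rw [rankOne_apply, inner_smul_left, inner_smul_left, adjoint_inner_left, inner_conj_symm,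
    map_inv₀, map_pow, RCLike.conj_ofReal]
  field_simp
  linear_combination this

theorem exists_eq_rankOne_of_tendsto_inner [l.NeBot] [CompleteSpace E] [CompleteSpace F]
    {e : ι → E →L[𝕜] F} {e₀ : E →L[𝕜] F} (hrank : ∀ k, ∃ x y, e k = rankOne 𝕜 x y)
    (he : ∀ μ h, Tendsto (fun k => ⟪e k μ, h⟫_𝕜) l (𝓝 ⟪e₀ μ, h⟫_𝕜)) :
    ∃ x y, e₀ = rankOne 𝕜 x y := by
  refine exists_eq_rankOne_of_inner_mul_comm e₀ fun μ μ' h h' =>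
    tendsto_nhds_unique ((he μ h).mul (he μ' h')) (((he μ' h).mul (he μ h')).congr fun k => ?_)
  obtain ⟨x, y, hk⟩ := hrank k
  rw [hk]
  exact inner_rankOne_mul_inner_rankOne_comm x y μ' μ h h'

end InnerProductSpace

end

theorem rankOne_eq_innerProductSpace_rankOne {r : ℕ} {H : Type*} [NormedAddCommGroup H]
    [InnerProductSpace ℂ H] (a : EuclideanSpace ℂ (Fin r)) (b : H) :
    rankOne a b = InnerProductSpace.rankOne ℂ b a :=
  rfl

theorem stmt2_general {r : ℕ} {H : Type*} [NormedAddCommGroup H] [InnerProductSpace ℂ H]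
    [CompleteSpace H] (z : ℕ → EuclideanSpace ℂ (Fin r) →L[ℂ] H)
    (ξ : EuclideanSpace ℂ (Fin r) →L[ℂ] H)
    (hz : Tendsto z atTop (nhds ξ))
    (e : ℕ → EuclideanSpace ℂ (Fin r) →L[ℂ] H) (e' : EuclideanSpace ℂ (Fin r) →L[ℂ] H)
    (hmin : ∀ k, ∃ (a : EuclideanSpace ℂ (Fin r)) (b : H),
      ‖a‖ = 1 ∧ ‖b‖ = 1 ∧ e k = rankOne a b)
    (he : ∀ (μ : EuclideanSpace ℂ (Fin r)) (h : H),
      Tendsto (fun k => (inner ℂ (e k μ) h : ℂ)) atTop (nhds (inner ℂ (e' μ) h))) :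
    ∀ (μ : EuclideanSpace ℂ (Fin r)) (h : H),
      Tendsto (fun k => (inner ℂ ((e k ∘L adjoint (z k) ∘L e k) μ) h : ℂ)) atTop
        (nhds (inner ℂ ((e' ∘L adjoint ξ ∘L e') μ) h)) := by
  intro μ h
  have hrank : ∀ k, ∃ x y, e k = InnerProductSpace.rankOne ℂ x y := fun k => by
    obtain ⟨a, b, -, -, hk⟩ := hmin k
    exact ⟨b, a, hk.trans (rankOne_eq_innerProductSpace_rankOne a b)⟩
  have hnorm : ∀ k, ‖e k‖ ≤ 1 := fun k => by
    obtain ⟨a, b, ha, hb, hk⟩ := hmin k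
    simp [hk, rankOne_eq_innerProductSpace_rankOne, ha, hb]
  have hsandwich : ∀ k, e k ∘L adjoint (z k) ∘L e k
      = LinearMap.trace ℂ (EuclideanSpace ℂ (Fin r)) (adjoint (z k) ∘L e k) • e k := fun k => by
    obtain ⟨x, y, hk⟩ := hrank k
    rw [hk, InnerProductSpace.rankOne_comp_adjoint_comp_rankOne]
  have htrace := tendsto_trace_adjoint_comp hz he hnorm
  obtain ⟨x, y, rfl⟩ := InnerProductSpace.exists_eq_rankOne_of_tendsto_inner hrank he
  simp only [hsandwich, InnerProductSpace.rankOne_comp_adjoint_comp_rankOne, smul_apply,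
    inner_smul_left]
  exact ((RCLike.continuous_conj.tendsto _).comp htrace).mul (he μ h)

/-- Lemma 4.3 (for the Cartan factor `L(ℂ^r, H)`): if `(z_k)` converges in norm to `ξ` and
`(e_k)` is a sequence of minimal tripotents converging in the weak operator topology to `e`,
then `{e_k, z_k, e_k} = e_k z_k* e_k` converges to `{e, ξ, e} = e ξ* e` in the weak
operator topology. -/
theorem stmt2 {r : ℕ} (hr : 0 < r) {H : Type*} [NormedAddCommGroup H] [InnerProductSpace ℂ H]
    [CompleteSpace H] (z : ℕ → EuclideanSpace ℂ (Fin r) →L[ℂ] H)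
    (ξ : EuclideanSpace ℂ (Fin r) →L[ℂ] H)
    (hz : Tendsto z atTop (nhds ξ))
    (e : ℕ → EuclideanSpace ℂ (Fin r) →L[ℂ] H) (e' : EuclideanSpace ℂ (Fin r) →L[ℂ] H)
    (hmin : ∀ k, ∃ (a : EuclideanSpace ℂ (Fin r)) (b : H),
      ‖a‖ = 1 ∧ ‖b‖ = 1 ∧ e k = rankOne a b)
    (he : ∀ (μ : EuclideanSpace ℂ (Fin r)) (h : H),
      Tendsto (fun k => (inner ℂ (e k μ) h : ℂ)) atTop (nhds (inner ℂ (e' μ) h))) :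
    ∀ (μ : EuclideanSpace ℂ (Fin r)) (h : H),
      Tendsto (fun k => (inner ℂ ((e k ∘L adjoint (z k) ∘L e k) μ) h : ℂ)) atTop
        (nhds (inner ℂ ((e' ∘L adjoint ξ ∘L e') μ) h)) :=
  stmt2_general z ξ hz e e' hmin he
end

section
/- Let r be a positive integer and H a complex Hilbert space. Suppose e ∈ L(ℂ^r, H) is the weak-operator-topology limit of a sequence (e_k) of minimal tripotents in L(ℂ^r, H) (i.e., e_k = a_k⊗b_k with unit vectors a_k ∈ ℂ^r, b_k ∈ H). Then {e, L(ℂ^r, H), e} ⊆ ℂ e; that is, for every z ∈ L(ℂ^r, H) there exists λ ∈ ℂ with e z* e = λ e. -/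
/-!
A rank-one operator `a ⊗ b` has matrix coefficients `⟪(a ⊗ b) μ, h⟫ = ⟪μ, a⟫ ⟪b, h⟫`, whose
`2 × 2` minors vanish. This polynomial identity in the coefficients survives weak-operator limits,
and it forces the range of the limit `e` into a line `ℂ b`. For such an `e` and any `S`, writing
`e (S b) = λ b` gives `e S e μ = λ e μ`; take `S = z*`.
-/

open ContinuousLinearMap Filter

section

variable {𝕜 E F : Type*} [RCLike 𝕜] [NormedAddCommGroup E] [NormedSpace 𝕜 E]
  [NormedAddCommGroup F] [InnerProductSpace 𝕜 F]

def InnerMinorsVanish (T : E →L[𝕜] F) : Prop :=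
  ∀ (μ ν : E) (h h' : F),
    (inner 𝕜 (T μ) h : 𝕜) * inner 𝕜 (T ν) h' = inner 𝕜 (T μ) h' * inner 𝕜 (T ν) h

theorem innerMinorsVanish_rankOne {r : ℕ} {H : Type*} [NormedAddCommGroup H]
    [InnerProductSpace ℂ H] (a : EuclideanSpace ℂ (Fin r)) (b : H) :
    InnerMinorsVanish (rankOne a b) := by
  intro μ ν h h'
  simp only [rankOne, smulRight_apply, innerSL_apply_apply, inner_smul_left]
  ring

theorem InnerMinorsVanish.of_tendsto {ι : Type*} {l : Filter ι} [l.NeBot]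
    {T : ι → E →L[𝕜] F} {T' : E →L[𝕜] F} (hT : ∀ i, InnerMinorsVanish (T i))
    (hlim : ∀ μ h, Tendsto (fun i => (inner 𝕜 (T i μ) h : 𝕜)) l (nhds (inner 𝕜 (T' μ) h))) :
    InnerMinorsVanish T' := by
  intro μ ν h h'
  refine tendsto_nhds_unique ((hlim μ h).mul (hlim ν h')) ?_
  exact ((hlim μ h').mul (hlim ν h)).congr fun i => (hT i μ ν h h').symm

theorem InnerMinorsVanish.exists_forall_apply_eq_smul {T : E →L[𝕜] F}
    (hT : InnerMinorsVanish T) : ∃ b : F, ∀ μ, ∃ c : 𝕜, T μ = c • b := by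
  by_cases hzero : ∀ μ, T μ = 0
  · exact ⟨0, fun μ => ⟨0, by simp [hzero μ]⟩⟩
  push Not at hzero
  obtain ⟨μ₀, hμ₀⟩ := hzero
  have hb : (inner 𝕜 (T μ₀) (T μ₀) : 𝕜) ≠ 0 := inner_self_ne_zero.mpr hμ₀
  refine ⟨T μ₀, fun μ => ⟨inner 𝕜 (T μ₀) (T μ) / inner 𝕜 (T μ₀) (T μ₀), ?_⟩⟩
  refine ext_inner_right 𝕜 fun h => ?_
  rw [inner_smul_left, map_div₀, inner_conj_symm, inner_conj_symm]
  field_simp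
  linear_combination -hT μ μ₀ (T μ₀) h

theorem comp_comp_eq_smul_of_forall_apply_eq_smul {T : E →L[𝕜] F} {b : F}
    (hT : ∀ μ, ∃ c : 𝕜, T μ = c • b) (S : F →L[𝕜] E) : ∃ lam : 𝕜, T ∘L S ∘L T = lam • T := by
  obtain ⟨lam, hlam⟩ := hT (S b)
  refine ⟨lam, ContinuousLinearMap.ext fun μ => ?_⟩
  obtain ⟨c, hc⟩ := hT μ
  simp only [comp_apply, smul_apply, hc, map_smul, hlam, smul_comm c lam]

end

theorem stmt3_general {r : ℕ} {H : Type*} [NormedAddCommGroup H] [InnerProductSpace ℂ H]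
    [CompleteSpace H]
    (e : ℕ → EuclideanSpace ℂ (Fin r) →L[ℂ] H) (e' : EuclideanSpace ℂ (Fin r) →L[ℂ] H)
    (hmin : ∀ k, ∃ (a : EuclideanSpace ℂ (Fin r)) (b : H),
      ‖a‖ = 1 ∧ ‖b‖ = 1 ∧ e k = rankOne a b)
    (he : ∀ (μ : EuclideanSpace ℂ (Fin r)) (h : H),
      Tendsto (fun k => (inner ℂ (e k μ) h : ℂ)) atTop (nhds (inner ℂ (e' μ) h))) :
    ∀ z : EuclideanSpace ℂ (Fin r) →L[ℂ] H, ∃ lam : ℂ,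
      e' ∘L adjoint z ∘L e' = lam • e' := by
  have hminors : ∀ k, InnerMinorsVanish (e k) := fun k => by
    obtain ⟨a, b, -, -, hab⟩ := hmin k
    exact hab ▸ innerMinorsVanish_rankOne a b
  obtain ⟨b, hb⟩ := (InnerMinorsVanish.of_tendsto hminors he).exists_forall_apply_eq_smul
  exact fun z => comp_comp_eq_smul_of_forall_apply_eq_smul hb (adjoint z)

/-- If `e ∈ L(ℂ^r, H)` is the weak-operator-topology limit of a sequence of minimal
tripotents, then `{e, L(ℂ^r,H), e} ⊆ ℂ e`: for each `z` there is `λ ∈ ℂ` with `e z* e = λ e`. -/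
theorem stmt3 {r : ℕ} (hr : 0 < r) {H : Type*} [NormedAddCommGroup H] [InnerProductSpace ℂ H]
    [CompleteSpace H]
    (e : ℕ → EuclideanSpace ℂ (Fin r) →L[ℂ] H) (e' : EuclideanSpace ℂ (Fin r) →L[ℂ] H)
    (hmin : ∀ k, ∃ (a : EuclideanSpace ℂ (Fin r)) (b : H),
      ‖a‖ = 1 ∧ ‖b‖ = 1 ∧ e k = rankOne a b)
    (he : ∀ (μ : EuclideanSpace ℂ (Fin r)) (h : H),
      Tendsto (fun k => (inner ℂ (e k μ) h : ℂ)) atTop (nhds (inner ℂ (e' μ) h))) :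
    ∀ z : EuclideanSpace ℂ (Fin r) →L[ℂ] H, ∃ lam : ℂ,
      e' ∘L adjoint z ∘L e' = lam • e' :=
  stmt3_general e e' hmin he
end

section
/- Let r be a positive integer and H a complex Hilbert space. Let (e_k) and (u_k) be sequences of minimal tripotents in L(ℂ^r, H) (i.e., rank-one operators a_k⊗b_k and c_k⊗d_k with unit vectors) converging in the weak operator topology to e and u respectively. If e_k u_k* = 0 (as an operator from H to H) for all sufficiently large k, then e u* = 0. -/
/-! Since `ℂ^r` is finite-dimensional, weak operator convergence `A_k → A` forces
`A_k* g → A* g` in norm for every `g`: expanding in an orthonormal basis `(b_i)`, the coordinates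
of `A_k* g` are `⟪A_k b_i, g⟫`. Hence `⟪e_k (u_k* g), g'⟫ = ⟪u_k* g, e_k* g'⟫` converges to
`⟪e (u* g), g'⟫`, and it vanishes eventually. -/

open ContinuousLinearMap Filter

open Topology
open scoped InnerProductSpace

section WeakOperatorLimits

variable {𝕜 E F ι : Type*} [RCLike 𝕜]
  [NormedAddCommGroup E] [InnerProductSpace 𝕜 E] [FiniteDimensional 𝕜 E] [CompleteSpace E]
  [NormedAddCommGroup F] [InnerProductSpace 𝕜 F] [CompleteSpace F] {l : Filter ι}

theorem tendsto_adjoint_apply_of_tendsto_inner (A : ι → E →L[𝕜] F) (A' : E →L[𝕜] F)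
    (hA : ∀ x y, Tendsto (fun k => ⟪A k x, y⟫_𝕜) l (𝓝 ⟪A' x, y⟫_𝕜)) (y : F) :
    Tendsto (fun k => adjoint (A k) y) l (𝓝 (adjoint A' y)) := by
  let b := stdOrthonormalBasis 𝕜 E
  have expand : ∀ B : E →L[𝕜] F, adjoint B y = ∑ i, ⟪B (b i), y⟫_𝕜 • b i := fun B => by
    simp_rw [← adjoint_inner_right B, b.sum_repr']
  simp_rw [expand]
  exact tendsto_finsetSum _ fun i _ => (hA (b i) y).smul_const (b i)

theorem comp_adjoint_eq_zero_of_tendsto_inner [l.NeBot] (A B : ι → E →L[𝕜] F)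
    (A' B' : E →L[𝕜] F)
    (hA : ∀ x y, Tendsto (fun k => ⟪A k x, y⟫_𝕜) l (𝓝 ⟪A' x, y⟫_𝕜))
    (hB : ∀ x y, Tendsto (fun k => ⟪B k x, y⟫_𝕜) l (𝓝 ⟪B' x, y⟫_𝕜))
    (hAB : ∀ᶠ k in l, A k ∘L adjoint (B k) = 0) :
    A' ∘L adjoint B' = 0 := by
  ext g
  refine ext_inner_right 𝕜 fun g' => ?_
  have hlim : Tendsto (fun k => ⟪adjoint (B k) g, adjoint (A k) g'⟫_𝕜) l
      (𝓝 ⟪adjoint B' g, adjoint A' g'⟫_𝕜) :=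
    (tendsto_adjoint_apply_of_tendsto_inner B B' hB g).inner
      (tendsto_adjoint_apply_of_tendsto_inner A A' hA g')
  have hzero : ∀ᶠ k in l, ⟪adjoint (B k) g, adjoint (A k) g'⟫_𝕜 = 0 := by
    filter_upwards [hAB] with k hk
    rw [adjoint_inner_right, ← comp_apply, hk, zero_apply, inner_zero_left]
  rw [comp_apply, ← adjoint_inner_right, zero_apply, inner_zero_left,
    tendsto_nhds_unique (hlim.congr' hzero) tendsto_const_nhds]

end WeakOperatorLimits

theorem stmt4_general {r : ℕ} {H : Type*} [NormedAddCommGroup H] [InnerProductSpace ℂ H]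
    [CompleteSpace H]
    (e u : ℕ → EuclideanSpace ℂ (Fin r) →L[ℂ] H)
    (e' u' : EuclideanSpace ℂ (Fin r) →L[ℂ] H)
    (he : ∀ (μ : EuclideanSpace ℂ (Fin r)) (h : H),
      Tendsto (fun k => (inner ℂ (e k μ) h : ℂ)) atTop (nhds (inner ℂ (e' μ) h)))
    (hu : ∀ (μ : EuclideanSpace ℂ (Fin r)) (h : H),
      Tendsto (fun k => (inner ℂ (u k μ) h : ℂ)) atTop (nhds (inner ℂ (u' μ) h)))
    (hzero : ∀ᶠ k in atTop, e k ∘L adjoint (u k) = 0) :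
    e' ∘L adjoint u' = 0 :=
  comp_adjoint_eq_zero_of_tendsto_inner e u e' u' he hu hzero

/-- Lemma 5.4: if `(e_k)` and `(u_k)` are sequences of minimal tripotents in `L(ℂ^r, H)`
converging in the weak operator topology to `e` and `u` respectively, and `e_k u_k* = 0`
for all sufficiently large `k`, then `e u* = 0`. -/
theorem stmt4 {r : ℕ} (hr : 0 < r) {H : Type*} [NormedAddCommGroup H] [InnerProductSpace ℂ H]
    [CompleteSpace H]
    (e u : ℕ → EuclideanSpace ℂ (Fin r) →L[ℂ] H)
    (e' u' : EuclideanSpace ℂ (Fin r) →L[ℂ] H)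
    (hemin : ∀ k, ∃ (a : EuclideanSpace ℂ (Fin r)) (b : H),
      ‖a‖ = 1 ∧ ‖b‖ = 1 ∧ e k = rankOne a b)
    (humin : ∀ k, ∃ (c : EuclideanSpace ℂ (Fin r)) (d : H),
      ‖c‖ = 1 ∧ ‖d‖ = 1 ∧ u k = rankOne c d)
    (he : ∀ (μ : EuclideanSpace ℂ (Fin r)) (h : H),
      Tendsto (fun k => (inner ℂ (e k μ) h : ℂ)) atTop (nhds (inner ℂ (e' μ) h)))
    (hu : ∀ (μ : EuclideanSpace ℂ (Fin r)) (h : H),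
      Tendsto (fun k => (inner ℂ (u k μ) h : ℂ)) atTop (nhds (inner ℂ (u' μ) h)))
    (hzero : ∀ᶠ k in atTop, e k ∘L adjoint (u k) = 0) :
    e' ∘L adjoint u' = 0 :=
  stmt4_general e u e' u' he hu hzero
end

section
/- Let r be a positive integer and H a complex Hilbert space. Let (e_k) and (u_k) be sequences of minimal tripotents in L(ℂ^r, H) converging in the weak operator topology to e and u respectively, such that for each k the tripotents e_k and u_k are triple orthogonal, i.e., e_k □ u_k = 0. Then {e, u, e} = e u* e = 0. -/
/-!
Write `e_k = a_k ⊗ b_k` and `u_k = c_k ⊗ d_k`. Testing `e_k □ u_k = 0` on `x = a_k ⊗ d_k`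
gives `⟨a_k, c_k⟩ (b_k + ⟨d_k, b_k⟩ d_k) = 0`, and the second factor cannot vanish,
so `a_k ⊥ c_k`. Since `ℂ^r` is finite-dimensional, along a subsequence `a_k → A` and
`c_k → C` in norm, with `A ⊥ C` unit vectors. The identity `⟨a_k, A⟩ e_k μ = ⟨a_k, μ⟩ e_k A`
passes to the weak limit and shows `e = A ⊗ e A`; likewise `u = C ⊗ u C`, and then `e u* e`
is a multiple of `⟨A, C⟩ = 0`.
-/

open ContinuousLinearMap Filter

open scoped InnerProductSpace Topology

def TendstoWeakly {ι E F : Type*} [NormedAddCommGroup E] [InnerProductSpace ℂ E]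
    [NormedAddCommGroup F] [InnerProductSpace ℂ F]
    (T : ι → E →L[ℂ] F) (l : Filter ι) (T' : E →L[ℂ] F) : Prop :=
  ∀ (μ : E) (h : F), Tendsto (fun k => ⟪T k μ, h⟫_ℂ) l (𝓝 ⟪T' μ, h⟫_ℂ)

lemma TendstoWeakly.comp {ι κ E F : Type*} [NormedAddCommGroup E] [InnerProductSpace ℂ E]
    [NormedAddCommGroup F] [InnerProductSpace ℂ F] {T : ι → E →L[ℂ] F} {l : Filter ι}
    {T' : E →L[ℂ] F} (hT : TendstoWeakly T l T') {φ : κ → ι} {l' : Filter κ}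
    (hφ : Tendsto φ l' l) : TendstoWeakly (T ∘ φ) l' T' :=
  fun μ h => (hT μ h).comp hφ

section RankOne

variable {r : ℕ} {H : Type*} [NormedAddCommGroup H] [InnerProductSpace ℂ H]

lemma rankOne_apply (a : EuclideanSpace ℂ (Fin r)) (b : H) (μ : EuclideanSpace ℂ (Fin r)) :
    rankOne a b μ = ⟪a, μ⟫_ℂ • b :=
  rfl

lemma adjoint_rankOne_apply [CompleteSpace H] (a : EuclideanSpace ℂ (Fin r)) (b h : H) :
    adjoint (rankOne a b) h = ⟪b, h⟫_ℂ • a := by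
  refine ext_inner_right ℂ fun ν => ?_
  rw [adjoint_inner_left, rankOne_apply, inner_smul_left, inner_smul_right, inner_conj_symm,
    mul_comm]

lemma rankOne_comp_adjoint_rankOne_comp_rankOne [CompleteSpace H]
    (a c a' : EuclideanSpace ℂ (Fin r)) (b d b' : H) :
    rankOne a b ∘L adjoint (rankOne c d) ∘L rankOne a' b' =
      (⟪a, c⟫_ℂ * ⟪d, b'⟫_ℂ) • rankOne a' b := by
  ext μ
  simp only [comp_apply, smul_apply, rankOne_apply, adjoint_rankOne_apply, inner_smul_right,
    smul_smul]
  ring_nf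

lemma inner_eq_zero_of_rankOne_tripleOrthogonal [CompleteSpace H]
    {a c : EuclideanSpace ℂ (Fin r)} {b d : H}
    (ha : ‖a‖ = 1) (hb : ‖b‖ = 1) (hd : ‖d‖ = 1)
    (horth : ∀ x : EuclideanSpace ℂ (Fin r) →L[ℂ] H,
      rankOne a b ∘L adjoint (rankOne c d) ∘L x +
        x ∘L adjoint (rankOne c d) ∘L rankOne a b = 0) :
    ⟪a, c⟫_ℂ = 0 := by
  have hsum : ⟪a, c⟫_ℂ • (b + ⟪d, b⟫_ℂ • d) = 0 := by
    have := congrArg (fun T => T a) (horth (rankOne a d))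
    simpa only [rankOne_comp_adjoint_rankOne_comp_rankOne, add_apply, smul_apply,
      rankOne_apply, inner_self_eq_one_of_norm_eq_one ha, inner_self_eq_one_of_norm_eq_one hd,
      one_mul, one_smul, mul_smul, smul_add, zero_apply] using this
  refine (smul_eq_zero.mp hsum).resolve_right fun hv => ?_
  -- pairing `b + ⟨d, b⟩ d = 0` with `d` forces `⟨d, b⟩ = 0`, hence `b = 0`
  have hdb : ⟪d, b⟫_ℂ = 0 := by
    have := congrArg (fun v => ⟪d, v⟫_ℂ) hv
    simp only [inner_add_right, inner_smul_right, inner_self_eq_one_of_norm_eq_one hd,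
      mul_one, inner_zero_right] at this
    linear_combination this / 2
  rw [hdb, zero_smul, add_zero] at hv
  simp [hv] at hb

lemma eq_rankOne_of_tendstoWeakly {ι : Type*} {l : Filter ι} [l.NeBot]
    {T : ι → EuclideanSpace ℂ (Fin r) →L[ℂ] H} {T' : EuclideanSpace ℂ (Fin r) →L[ℂ] H}
    {a : ι → EuclideanSpace ℂ (Fin r)} {b : ι → H} {A : EuclideanSpace ℂ (Fin r)}
    (hT : ∀ k, T k = rankOne (a k) (b k)) (hA : ‖A‖ = 1) (ha : Tendsto a l (𝓝 A))
    (hw : TendstoWeakly T l T') :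
    T' = rankOne A (T' A) := by
  ext μ
  refine ext_inner_right ℂ fun h => ?_
  have hlim : ∀ (ν : EuclideanSpace ℂ (Fin r)) (s : ι → ℂ) (s₀ : ℂ),
      Tendsto s l (𝓝 s₀) →
        Tendsto (fun k => ⟪s k • T k ν, h⟫_ℂ) l (𝓝 ⟪s₀ • T' ν, h⟫_ℂ) := by
    intro ν s s₀ hs
    simp only [inner_smul_left]
    exact ((Complex.continuous_conj.tendsto s₀).comp hs).mul (hw ν h)
  have hident : ∀ k, ⟪a k, A⟫_ℂ • T k μ = ⟪a k, μ⟫_ℂ • T k A := fun k => by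
    rw [hT, rankOne_apply, rankOne_apply, smul_smul, smul_smul, mul_comm]
  have h₁ := hlim μ _ _ (ha.inner (tendsto_const_nhds (x := A)))
  have h₂ := hlim A _ _ (ha.inner (tendsto_const_nhds (x := μ)))
  simp only [hident, inner_self_eq_one_of_norm_eq_one hA, one_smul] at h₁
  exact tendsto_nhds_unique h₁ h₂

end RankOne

theorem stmt5_general {r : ℕ} {H : Type*} [NormedAddCommGroup H] [InnerProductSpace ℂ H]
    [CompleteSpace H]
    (e u : ℕ → EuclideanSpace ℂ (Fin r) →L[ℂ] H)
    (e' u' : EuclideanSpace ℂ (Fin r) →L[ℂ] H)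
    (hemin : ∀ k, ∃ (a : EuclideanSpace ℂ (Fin r)) (b : H),
      ‖a‖ = 1 ∧ ‖b‖ = 1 ∧ e k = rankOne a b)
    (humin : ∀ k, ∃ (c : EuclideanSpace ℂ (Fin r)) (d : H),
      ‖c‖ = 1 ∧ ‖d‖ = 1 ∧ u k = rankOne c d)
    (he : ∀ (μ : EuclideanSpace ℂ (Fin r)) (h : H),
      Tendsto (fun k => (inner ℂ (e k μ) h : ℂ)) atTop (nhds (inner ℂ (e' μ) h)))
    (hu : ∀ (μ : EuclideanSpace ℂ (Fin r)) (h : H),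
      Tendsto (fun k => (inner ℂ (u k μ) h : ℂ)) atTop (nhds (inner ℂ (u' μ) h)))
    (horth : ∀ k, ∀ x : EuclideanSpace ℂ (Fin r) →L[ℂ] H,
      e k ∘L adjoint (u k) ∘L x + x ∘L adjoint (u k) ∘L e k = 0) :
    e' ∘L adjoint u' ∘L e' = 0 := by
  choose a b ha hb hea using hemin
  choose c d hc hd huc using humin
  have hac : ∀ k, ⟪a k, c k⟫_ℂ = 0 := fun k =>
    inner_eq_zero_of_rankOne_tripleOrthogonal (ha k) (hb k) (hd k)
      (by simpa only [hea, huc] using horth k)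
  obtain ⟨⟨A, C⟩, ⟨hA, hC⟩, φ, hφ, hlim⟩ :=
    ((isCompact_sphere (0 : EuclideanSpace ℂ (Fin r)) 1).prod
      (isCompact_sphere 0 1)).tendsto_subseq (x := fun k => (a k, c k))
        fun k => ⟨by simpa using ha k, by simpa using hc k⟩
  rw [mem_sphere_zero_iff_norm] at hA hC
  have hAC : ⟪A, C⟫_ℂ = 0 :=
    tendsto_nhds_unique (hlim.fst_nhds.inner hlim.snd_nhds)
      (by simp only [Function.comp_def, hac]; exact tendsto_const_nhds)
  have he' : e' = rankOne A (e' A) := eq_rankOne_of_tendstoWeakly (fun k => hea (φ k)) hA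
    hlim.fst_nhds (TendstoWeakly.comp he hφ.tendsto_atTop)
  have hu' : u' = rankOne C (u' C) := eq_rankOne_of_tendstoWeakly (fun k => huc (φ k)) hC
    hlim.snd_nhds (TendstoWeakly.comp hu hφ.tendsto_atTop)
  rw [he', hu', rankOne_comp_adjoint_rankOne_comp_rankOne, hAC, zero_mul, zero_smul]

/-- Corollary 5.5 (for the Cartan factor `L(ℂ^r, H)`): if `(e_k)` and `(u_k)` are sequences
of minimal tripotents converging weakly to `e` and `u` respectively, with `e_k □ u_k = 0`
(triple orthogonality: `e_k u_k* x + x u_k* e_k = 0` for all `x`) for each `k`, then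
`{e, u, e} = e u* e = 0`. -/
theorem stmt5 {r : ℕ} (hr : 0 < r) {H : Type*} [NormedAddCommGroup H] [InnerProductSpace ℂ H]
    [CompleteSpace H]
    (e u : ℕ → EuclideanSpace ℂ (Fin r) →L[ℂ] H)
    (e' u' : EuclideanSpace ℂ (Fin r) →L[ℂ] H)
    (hemin : ∀ k, ∃ (a : EuclideanSpace ℂ (Fin r)) (b : H),
      ‖a‖ = 1 ∧ ‖b‖ = 1 ∧ e k = rankOne a b)
    (humin : ∀ k, ∃ (c : EuclideanSpace ℂ (Fin r)) (d : H),
      ‖c‖ = 1 ∧ ‖d‖ = 1 ∧ u k = rankOne c d)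
    (he : ∀ (μ : EuclideanSpace ℂ (Fin r)) (h : H),
      Tendsto (fun k => (inner ℂ (e k μ) h : ℂ)) atTop (nhds (inner ℂ (e' μ) h)))
    (hu : ∀ (μ : EuclideanSpace ℂ (Fin r)) (h : H),
      Tendsto (fun k => (inner ℂ (u k μ) h : ℂ)) atTop (nhds (inner ℂ (u' μ) h)))
    (horth : ∀ k, ∀ x : EuclideanSpace ℂ (Fin r) →L[ℂ] H,
      e k ∘L adjoint (u k) ∘L x + x ∘L adjoint (u k) ∘L e k = 0) :
    e' ∘L adjoint u' ∘L e' = 0 :=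
  stmt5_general e u e' u' hemin humin he hu horth
end

section
/- Let A be a C*-algebra, r ≥ 2, and let e₁, …, e_r ∈ A be mutually orthogonal tripotents (e_i e_i* e_i = e_i and e_i □ e_j = 0 for i ≠ j). Let 2 ≤ m ≤ r and 1 ≤ j ≤ m−1. Then, as bounded linear maps on A, P₁(e_j) ∘ (∏_{i ∈ {1,…,m−1}, i ≠ j} P₀(e_i)) = P₁(e_j) ∘ (∏_{i ∈ {1,…,r}, i ≠ j} P₀(e_i)) + Σ_{k=m}^{r} P₁(e_j) ∘ P₁(e_k), where each product of projections is taken in increasing order of index (the Peirce projections of mutually orthogonal tripotents commute, so the order is immaterial). -/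
/-- The box operator `e □ e` of a C*-algebra (as a JB*-triple):
`x ↦ {e,e,x} = (e e* x + x e* e)/2`. -/
noncomputable def boxSelf {A : Type*} [NonUnitalCStarAlgebra A] (e x : A) : A :=
  (2 : ℂ)⁻¹ • (e * star e * x + x * star e * e)

/-- The Peirce 2-projection `P₂(e) = 2(e□e)² − e□e`. -/
noncomputable def P2 {A : Type*} [NonUnitalCStarAlgebra A] (e x : A) : A :=
  (2 : ℂ) • boxSelf e (boxSelf e x) - boxSelf e x

/-- The Peirce 1-projection `P₁(e) = 4(e□e − (e□e)²)`. -/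
noncomputable def P1 {A : Type*} [NonUnitalCStarAlgebra A] (e x : A) : A :=
  (4 : ℂ) • (boxSelf e x - boxSelf e (boxSelf e x))

/-- The Peirce 0-projection `P₀(e) : x ↦ x − e e* x − x e* e + e e* x e* e`. -/
def P0 {A : Type*} [NonUnitalCStarAlgebra A] (e x : A) : A :=
  x - e * star e * x - x * star e * e + e * star e * x * star e * e

/-- Composition, in the order listed, of the maps `f i` for `i` running through a list `l`,
applied to `x`; for an increasing list this is the product taken in increasing index order. -/
def compList {A : Type*} (f : ℕ → A → A) (l : List ℕ) (x : A) : A :=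
  l.foldr (fun i y => f i y) x

/-!
With `p = e e*` and `q = e* e`, a tripotent `e` has `P₂(e) x = p x q`,
`P₁(e) x = p x + x q - 2 p x q` and `P₀(e) x = x - p x - x q + p x q`, and orthogonal tripotents
have mutually annihilating `p`'s and `q`'s. Hence for distinct indices `P₀(e_i)` commutes with
`P₁(e_k)` and `P₂(e_k)`, `P₁(e_j) P₂(e_k) = 0`, and `P₁(e_j) P₁(e_k) P₀(e_i) = P₁(e_j) P₁(e_k)`.
Writing `P₀(e_k) = 1 - P₁(e_k) - P₂(e_k)`, each further factor `P₀(e_k)`, `k = m, …, r`, appended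
to the product therefore subtracts exactly `P₁(e_j) P₁(e_k)`.
-/

def IsTripotent {A : Type*} [Mul A] [Star A] (u : A) : Prop :=
  u * star u * u = u

/-- Orthogonality of tripotents in its C*-algebraic form, implied by `u □ v = 0`. -/
def StarOrthogonal {A : Type*} [Mul A] [Zero A] [Star A] (u v : A) : Prop :=
  star u * v = 0 ∧ u * star v = 0

section Ring

variable {A : Type*} [NonUnitalRing A] [StarRing A] {u v : A}

theorem isTripotent_star (hu : IsTripotent u) : IsTripotent (star u) := by
  unfold IsTripotent at *
  simpa only [star_mul, star_star, mul_assoc] using congrArg star hu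

theorem IsTripotent.mul_star_mul_mul (hu : IsTripotent u) (y : A) :
    u * (star u * (u * y)) = u * y := by
  simpa only [mul_assoc] using congrArg (· * y) hu

theorem IsTripotent.mul_star_mul_assoc (hu : IsTripotent u) : u * (star u * u) = u := by
  rw [← mul_assoc, hu]

theorem IsTripotent.mul_star_mul_self (hu : IsTripotent u) :
    u * star u * (u * star u) = u * star u := by
  rw [← mul_assoc, hu]

theorem IsTripotent.star_mul_self_mul (hu : IsTripotent u) :
    star u * u * (star u * u) = star u * u := by
  simpa only [star_star] using (isTripotent_star hu).mul_star_mul_self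

theorem StarOrthogonal.symm (h : StarOrthogonal u v) : StarOrthogonal v u :=
  ⟨by simpa using congrArg star h.1, by simpa using congrArg star h.2⟩

theorem starOrthogonal_of_box_eq_zero [Module ℂ A] [NoZeroSMulDivisors ℂ A] (hv : IsTripotent v)
    (h : ∀ x : A, u * star v * x + x * star v * u = 0) : StarOrthogonal u v := by
  have huq : u * (star v * v) = -(v * star v * u) :=
    eq_neg_of_add_eq_zero_left (by rw [← mul_assoc]; exact h v)
  -- with `p = v v*`, `q = v* v`: `p u = p (p u) = -(p u q) = u q q = u q = -(p u)`
  have hpu_neg : v * star v * u = -(v * star v * u) :=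
    calc v * star v * u = v * star v * (v * star v * u) := by
          rw [← mul_assoc, hv.mul_star_mul_self]
      _ = -(v * star v * u * (star v * v)) := by
          conv_lhs => rw [← neg_eq_iff_eq_neg.mpr huq, mul_neg, ← mul_assoc]
      _ = u * (star v * v) * (star v * v) := by
          rw [← neg_eq_iff_eq_neg.mpr huq, neg_mul, neg_neg]
      _ = -(v * star v * u) := by rw [mul_assoc, hv.star_mul_self_mul, huq]
  have hpu : v * star v * u = 0 := by
    have h2 : (2 : ℂ) • (v * star v * u) = 0 := by
      rw [two_smul]; nth_rewrite 2 [hpu_neg]; exact add_neg_cancel _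
    exact (smul_eq_zero.mp h2).resolve_left two_ne_zero
  constructor
  · have : star v * u = 0 := by
      rw [← isTripotent_star hv, star_star, mul_assoc, mul_assoc, ← mul_assoc v, hpu, mul_zero]
    simpa using congrArg star this
  · rw [← isTripotent_star hv, star_star, ← mul_assoc, huq, hpu, neg_zero, zero_mul]

theorem StarOrthogonal.star_mul_mul (h : StarOrthogonal u v) (y : A) : star u * (v * y) = 0 := by
  rw [← mul_assoc, h.1, zero_mul]

end Ring

section Peirce

variable {A : Type*} [NonUnitalCStarAlgebra A] {e : A}

theorem P2_eq (he : IsTripotent e) (x : A) : P2 e x = e * star e * x * star e * e := by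
  simp only [P2, boxSelf, smul_add, smul_smul, mul_smul_comm, smul_mul_assoc, mul_add, add_mul,
    mul_assoc, he.mul_star_mul_mul, he.mul_star_mul_assoc]
  module

theorem P1_eq (he : IsTripotent e) (x : A) :
    P1 e x = e * star e * x + x * star e * e - (2 : ℂ) • (e * star e * x * star e * e) := by
  simp only [P1, boxSelf, smul_add, smul_sub, smul_smul, mul_smul_comm, smul_mul_assoc, mul_add,
    add_mul, mul_assoc, he.mul_star_mul_mul, he.mul_star_mul_assoc]
  module

theorem P0_eq_sub_P1_sub_P2 (he : IsTripotent e) (x : A) : P0 e x = x - P1 e x - P2 e x := by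
  rw [P1_eq he, P2_eq he, P0]
  module

theorem P0_sub (e x y : A) : P0 e (x - y) = P0 e x - P0 e y := by
  simp only [P0, mul_sub, sub_mul]
  abel

theorem boxSelf_sub (e x y : A) : boxSelf e (x - y) = boxSelf e x - boxSelf e y := by
  simp only [boxSelf, mul_sub, sub_mul]
  module

theorem P1_sub (e x y : A) : P1 e (x - y) = P1 e x - P1 e y := by
  simp only [P1, boxSelf_sub, smul_sub]
  abel

end Peirce

section Orthogonal

variable {A : Type*} [NonUnitalCStarAlgebra A] {u v w : A}

theorem P0_P1_comm (hv : IsTripotent v) (huv : StarOrthogonal u v) (x : A) :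
    P0 u (P1 v x) = P1 v (P0 u x) := by
  simp only [P0, P1_eq hv, mul_add, add_mul, mul_sub, sub_mul, mul_smul_comm, smul_mul_assoc,
    mul_assoc, huv.star_mul_mul, huv.symm.star_mul_mul, huv.2, huv.symm.2, mul_zero, zero_mul,
    smul_zero, sub_zero, add_zero, zero_add]
  abel

theorem P0_P2_comm (hv : IsTripotent v) (huv : StarOrthogonal u v) (x : A) :
    P0 u (P2 v x) = P2 v (P0 u x) := by
  simp only [P0, P2_eq hv, mul_add, mul_sub, sub_mul, mul_assoc, huv.star_mul_mul,
    huv.symm.star_mul_mul, huv.2, huv.symm.2, mul_zero, zero_mul, sub_zero, add_zero]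

theorem P1_P2_eq_zero (hu : IsTripotent u) (hv : IsTripotent v) (huv : StarOrthogonal u v)
    (x : A) : P1 u (P2 v x) = 0 := by
  simp only [P1_eq hu, P2_eq hv, mul_assoc, huv.star_mul_mul, huv.symm.2, mul_zero, zero_mul,
    smul_zero, sub_zero, add_zero]

theorem P1_P1_eq (hu : IsTripotent u) (hv : IsTripotent v) (huv : StarOrthogonal u v) (x : A) :
    P1 u (P1 v x) = u * star u * x * star v * v + v * star v * x * star u * u := by
  simp only [P1_eq hu, P1_eq hv, mul_add, add_mul, mul_sub, sub_mul, mul_smul_comm, smul_mul_assoc,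
    mul_assoc, huv.star_mul_mul, huv.symm.2, mul_zero, zero_mul, smul_zero, sub_zero, add_zero,
    zero_add]

theorem P1_P1_P0 (hu : IsTripotent u) (hv : IsTripotent v) (huv : StarOrthogonal u v)
    (huw : StarOrthogonal u w) (hvw : StarOrthogonal v w) (x : A) :
    P1 u (P1 v (P0 w x)) = P1 u (P1 v x) := by
  simp only [P1_P1_eq hu hv huv, P0, mul_add, mul_sub, sub_mul, mul_assoc, huw.star_mul_mul,
    hvw.star_mul_mul, huw.symm.2, hvw.symm.2, mul_zero, sub_zero, add_zero]

end Orthogonal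

section compList

variable {A : Type*} (f : ℕ → A → A)

theorem compList_cons (i : ℕ) (l : List ℕ) (x : A) :
    compList f (i :: l) x = f i (compList f l x) := rfl

theorem compList_append (l₁ l₂ : List ℕ) (x : A) :
    compList f (l₁ ++ l₂) x = compList f l₁ (compList f l₂ x) :=
  List.foldr_append

theorem compList_sub [AddGroup A] (hf : ∀ i x y, f i (x - y) = f i x - f i y) (l : List ℕ)
    (x y : A) : compList f l (x - y) = compList f l x - compList f l y := by
  induction l with
  | nil => rfl
  | cons i l ih => rw [compList_cons, ih, hf, compList_cons, compList_cons]

theorem compList_commute {g : A → A} {l : List ℕ} (hg : ∀ i ∈ l, ∀ y, f i (g y) = g (f i y))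
    (x : A) : compList f l (g x) = g (compList f l x) := by
  induction l with
  | nil => rfl
  | cons i l ih =>
    rw [List.forall_mem_cons] at hg
    rw [compList_cons, ih hg.2, hg.1, compList_cons]

theorem apply_compList_of_absorbs {B : Type*} {G : A → B} {l : List ℕ}
    (hG : ∀ i ∈ l, ∀ y, G (f i y) = G y) (x : A) : G (compList f l x) = G x := by
  induction l with
  | nil => rfl
  | cons i l ih =>
    rw [List.forall_mem_cons] at hG
    rw [compList_cons, hG.1, ih hG.2]

end compList

section Family

variable {A : Type*} [NonUnitalCStarAlgebra A] {e : ℕ → A} {S : Set ℕ}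

theorem P1_compList_P0 (hT : ∀ i ∈ S, IsTripotent (e i))
    (hO : S.Pairwise fun i k => StarOrthogonal (e i) (e k)) {j k : ℕ} (hj : j ∈ S) (hk : k ∈ S)
    (hjk : j ≠ k) {L : List ℕ} (hL : ∀ i ∈ L, i ∈ S ∧ i ≠ j ∧ i ≠ k) (y : A) :
    P1 (e j) (compList (fun i => P0 (e i)) L (P0 (e k) y))
      = P1 (e j) (compList (fun i => P0 (e i)) L y) - P1 (e j) (P1 (e k) y) := by
  have hLk : ∀ i ∈ L, StarOrthogonal (e i) (e k) := fun i hi => hO (hL i hi).1 hk (hL i hi).2.2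
  have hjL : ∀ i ∈ L, StarOrthogonal (e j) (e i) :=
    fun i hi => hO hj (hL i hi).1 (hL i hi).2.1.symm
  have hjk_orth := hO hj hk hjk
  rw [P0_eq_sub_P1_sub_P2 (hT k hk), compList_sub _ (fun i => P0_sub (e i)),
    compList_sub _ (fun i => P0_sub (e i)), P1_sub, P1_sub,
    compList_commute _ (fun i hi => P0_P1_comm (hT k hk) (hLk i hi)),
    compList_commute _ (fun i hi => P0_P2_comm (hT k hk) (hLk i hi)),
    P1_P2_eq_zero (hT j hj) (hT k hk) hjk_orth, sub_zero,
    apply_compList_of_absorbs _ (G := fun z => P1 (e j) (P1 (e k) z))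
      (fun i hi => P1_P1_P0 (hT j hj) (hT k hk) hjk_orth (hjL i hi) (hLk i hi).symm)]

theorem P1_compList_append (hT : ∀ i ∈ S, IsTripotent (e i))
    (hO : S.Pairwise fun i k => StarOrthogonal (e i) (e k)) {j : ℕ} (hj : j ∈ S)
    {L K : List ℕ} (hL : ∀ i ∈ L, i ∈ S ∧ i ≠ j) (hK : ∀ k ∈ K, k ∈ S ∧ k ≠ j ∧ k ∉ L)
    (hK_nodup : K.Nodup) (x : A) :
    P1 (e j) (compList (fun i => P0 (e i)) (L ++ K) x)
      = P1 (e j) (compList (fun i => P0 (e i)) L x)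
        - (K.map fun k => P1 (e j) (P1 (e k) x)).sum := by
  induction K with
  | nil => simp [compList]
  | cons k K ih =>
    rw [List.forall_mem_cons] at hK
    rw [List.nodup_cons] at hK_nodup
    obtain ⟨⟨hk, hkj, hkL⟩, hK⟩ := hK
    have hKS : ∀ i ∈ K, i ∈ S ∧ i ≠ j ∧ i ≠ k :=
      fun i hi => ⟨(hK i hi).1, (hK i hi).2.1, fun h => hK_nodup.1 (h ▸ hi)⟩
    have hjk_orth := hO hj hk hkj.symm
    rw [compList_append, compList_cons, P1_compList_P0 hT hO hj hk hkj.symm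
        (fun i hi => ⟨(hL i hi).1, (hL i hi).2, fun h => hkL (h ▸ hi)⟩),
      ← compList_append, ih hK hK_nodup.2,
      apply_compList_of_absorbs _ (G := fun z => P1 (e j) (P1 (e k) z))
        (fun i hi => P1_P1_P0 (hT j hj) (hT k hk) hjk_orth (hO hj (hKS i hi).1 (hKS i hi).2.1.symm)
          (hO hk (hKS i hi).1 (hKS i hi).2.2.symm)),
      List.map_cons, List.sum_cons]
    abel

end Family

theorem filter_ne_range'_eq_append {j m r : ℕ} (hjm : j < m) (hmr : m ≤ r) :
    (List.range' 1 r).filter (· ≠ j)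
      = (List.range' 1 (m - 1)).filter (· ≠ j) ++ List.range' m (r + 1 - m) := by
  have h := List.range'_append (s := 1) (m := m - 1) (n := r + 1 - m) (step := 1)
  rw [show 1 + 1 * (m - 1) = m by omega, show m - 1 + (r + 1 - m) = r by omega] at h
  rw [← h, List.filter_append]
  congr 1
  refine List.filter_eq_self.mpr fun k hk => ?_
  simp only [List.mem_range'_1] at hk
  simpa using (by omega : k ≠ j)

theorem stmt8_general {A : Type*} [NonUnitalCStarAlgebra A] (r : ℕ) (e : ℕ → A)
    (htri : ∀ i ∈ Finset.Icc 1 r, e i * star (e i) * e i = e i)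
    (horth : ∀ i ∈ Finset.Icc 1 r, ∀ j ∈ Finset.Icc 1 r, i ≠ j →
      ∀ x : A, e i * star (e j) * x + x * star (e j) * e i = 0)
    (m : ℕ) (hmr : m ≤ r) (j : ℕ) (hj1 : 1 ≤ j) (hjm : j ≤ m - 1) :
    ∀ x : A,
      P1 (e j) (compList (fun i => P0 (e i)) ((List.range' 1 (m - 1)).filter (· ≠ j)) x)
        = P1 (e j) (compList (fun i => P0 (e i)) ((List.range' 1 r).filter (· ≠ j)) x)
          + ∑ k ∈ Finset.Icc m r, P1 (e j) (P1 (e k) x) := by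
  intro x
  set L := (List.range' 1 (m - 1)).filter (· ≠ j)
  have hO : (Finset.Icc 1 r : Set ℕ).Pairwise fun i k => StarOrthogonal (e i) (e k) :=
    fun i hi k hk hik => starOrthogonal_of_box_eq_zero (htri k hk) (horth i hi k hk hik)
  have hL : ∀ i ∈ L, 1 ≤ i ∧ i < m ∧ i ≠ j := by
    intro i hi
    simp only [L, List.mem_filter, List.mem_range'_1, decide_eq_true_eq] at hi
    omega
  have hj : j ∈ Finset.Icc 1 r := Finset.mem_Icc.mpr ⟨hj1, by omega⟩
  rw [filter_ne_range'_eq_append (by omega) hmr,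
    P1_compList_append htri hO hj (fun i hi => ?_) (fun k hk => ?_) List.nodup_range',
    Nat.Icc_eq_range']
  · exact (sub_add_cancel _ _).symm
  · have := hL i hi
    simp only [Finset.coe_Icc, Set.mem_Icc]
    omega
  · simp only [List.mem_range'_1, Finset.coe_Icc, Set.mem_Icc] at hk ⊢
    exact ⟨by omega, by omega, fun hkL => by have := hL k hkL; omega⟩

/-- A piece of Lemma 3.1 (ii) (for C*-algebras): for mutually orthogonal tripotents
`e₁, …, e_r`, `2 ≤ m ≤ r` and `1 ≤ j ≤ m−1`,
`P₁(e_j) ∘ ∏_{i ≤ m−1, i ≠ j} P₀(e_i) = P₁(e_j) ∘ ∏_{i ≤ r, i ≠ j} P₀(e_i)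
  + Σ_{k=m}^r P₁(e_j) ∘ P₁(e_k)`. -/
theorem stmt8 {A : Type*} [NonUnitalCStarAlgebra A] (r : ℕ) (hr : 2 ≤ r) (e : ℕ → A)
    (htri : ∀ i ∈ Finset.Icc 1 r, e i * star (e i) * e i = e i)
    (horth : ∀ i ∈ Finset.Icc 1 r, ∀ j ∈ Finset.Icc 1 r, i ≠ j →
      ∀ x : A, e i * star (e j) * x + x * star (e j) * e i = 0)
    (m : ℕ) (hm2 : 2 ≤ m) (hmr : m ≤ r) (j : ℕ) (hj1 : 1 ≤ j) (hjm : j ≤ m - 1) :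
    ∀ x : A,
      P1 (e j) (compList (fun i => P0 (e i)) ((List.range' 1 (m - 1)).filter (· ≠ j)) x)
        = P1 (e j) (compList (fun i => P0 (e i)) ((List.range' 1 r).filter (· ≠ j)) x)
          + ∑ k ∈ Finset.Icc m r, P1 (e j) (P1 (e k) x) :=
  stmt8_general r e htri horth m hmr j hj1 hjm
end

section
/- Let A be a unital C*-algebra, let ξ ∈ A with ‖ξ‖ ≤ 1, let 0 < t < 1, and let z ∈ A. Then ‖(1 − t²ξξ*)^{-1/2} (1 − tξξ*) z (1−t) ξ*ξ (1 − t²ξ*ξ)^{-1/2}‖ ≤ (1−t)‖z‖ / √(1−t²) + t(1−t)²‖z‖ / (1−t²), i.e., the left-hand side is at most ( √((1−t)/(1+t)) + t(1−t)/(1+t) ) ‖z‖. -/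
open scoped NNReal

section helpers
variable {A : Type*} [CStarAlgebra A] [PartialOrder A] [StarOrderedRing A]

lemma aux_isUnit {x : A} {c : ℝ} (hc : 0 < c) (h : algebraMap ℝ A c ≤ x) : IsUnit x :=
  CStarAlgebra.isUnit_of_le _ h (((isUnit_iff_ne_zero.mpr hc.ne').map (algebraMap ℝ A)).isStrictlyPositive
    (by rw [Algebra.algebraMap_eq_smul_one]; exact smul_nonneg hc.le zero_le_one))

lemma aux_isUnit_sqrt {x : A} (hx : 0 ≤ x) (hu : IsUnit x) : IsUnit (CFC.sqrt x) := by
  rw [CFC.sqrt_eq_cfc]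
  refine isUnit_cfc (p := fun (y:A) => 0 ≤ y) _ x NNReal.continuous_sqrt.continuousOn hx
    (fun r hr => ?_)
  have h0 := spectrum.zero_notMem ℝ≥0 hu
  intro h
  rw [NNReal.sqrt_eq_zero] at h
  exact h0 (h ▸ hr)

lemma aux_inverse_norm {x : A} {c : ℝ} (hc : 0 < c) (hx : 0 ≤ x)
    (h : algebraMap ℝ A c ≤ x) : ‖Ring.inverse x‖ ≤ c⁻¹ := by
  have hmap : (0:A) ≤ algebraMap ℝ A c := by
    rw [Algebra.algebraMap_eq_smul_one]; exact smul_nonneg hc.le zero_le_one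
  have hua : IsUnit x := aux_isUnit hc h
  lift x to Aˣ using hua
  set u : Aˣ := (Units.map (algebraMap ℝ A : ℝ →* A)) (Units.mk0 c hc.ne')
  have hu : (u : A) = algebraMap ℝ A c := rfl
  have hle : (↑x⁻¹ : A) ≤ ↑u⁻¹ := CStarAlgebra.inv_le_inv (hu ▸ hmap) (hu ▸ h)
  have huinv : (↑u⁻¹ : A) = algebraMap ℝ A c⁻¹ := by
    show ((Units.map (algebraMap ℝ A : ℝ →* A)) (Units.mk0 c hc.ne'))⁻¹.val = _
    rw [← map_inv]; simp
  have hinv_nonneg : (0:A) ≤ ↑x⁻¹ := CFC.inv_nonneg_of_nonneg x hx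
  rw [Ring.inverse_unit]
  rw [CStarAlgebra.norm_le_iff_le_algebraMap _ (by positivity)]
  exact hle.trans_eq huinv

lemma aux_inverse_nonneg {x : A} (hx : 0 ≤ x) (hu : IsUnit x) : 0 ≤ Ring.inverse x := by
  lift x to Aˣ using hu
  rw [Ring.inverse_unit]
  exact CFC.inv_nonneg_of_nonneg x hx

omit [PartialOrder A] [StarOrderedRing A] in
lemma aux_norm_sq_selfAdjoint {y : A} (hy : IsSelfAdjoint y) : ‖y * y‖ = ‖y‖ * ‖y‖ := by
  nth_rewrite 1 [← hy.star_eq]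
  exact CStarRing.norm_star_mul_self (x := y)

lemma aux_inv_sqrt_norm {x : A} {c : ℝ} (hc : 0 < c) (hx : 0 ≤ x)
    (h : algebraMap ℝ A c ≤ x) :
    ‖Ring.inverse (CFC.sqrt x)‖ ≤ (Real.sqrt c)⁻¹ := by
  have hu : IsUnit x := aux_isUnit hc h
  have hs : IsUnit (CFC.sqrt x) := aux_isUnit_sqrt hx hu
  have hPP : Ring.inverse (CFC.sqrt x) * Ring.inverse (CFC.sqrt x) = Ring.inverse x := by
    rw [← Ring.mul_inverse_rev' (Commute.refl (CFC.sqrt x)), CFC.sqrt_mul_sqrt_self x hx]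
  have hPn : 0 ≤ Ring.inverse (CFC.sqrt x) := aux_inverse_nonneg (CFC.sqrt_nonneg x) hs
  have hsq : ‖Ring.inverse (CFC.sqrt x)‖ * ‖Ring.inverse (CFC.sqrt x)‖ ≤ c⁻¹ := by
    rw [← aux_norm_sq_selfAdjoint (IsSelfAdjoint.of_nonneg hPn), hPP]
    exact aux_inverse_norm hc hx h
  have key : (Real.sqrt c)⁻¹ * (Real.sqrt c)⁻¹ = c⁻¹ := by
    rw [← Real.sqrt_inv]
    exact Real.mul_self_sqrt (inv_pos.mpr hc).le
  nlinarith [norm_nonneg (Ring.inverse (CFC.sqrt x)), inv_pos.mpr (Real.sqrt_pos.mpr hc)]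

lemma aux_sqrt_norm_le_one {x : A} (hx : 0 ≤ x) (hx1 : x ≤ 1) : ‖CFC.sqrt x‖ ≤ 1 := by
  have h1 : ‖CFC.sqrt x‖ * ‖CFC.sqrt x‖ = ‖x‖ := by
    rw [← aux_norm_sq_selfAdjoint (IsSelfAdjoint.of_nonneg (CFC.sqrt_nonneg x)),
      CFC.sqrt_mul_sqrt_self x hx]
  have h2 : ‖x‖ ≤ 1 := (CStarAlgebra.norm_le_one_iff_of_nonneg x hx).mpr hx1
  nlinarith [norm_nonneg (CFC.sqrt x)]


omit [PartialOrder A] [StarOrderedRing A] in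
lemma aux_norm_mul4 (p q r s : A) : ‖p * q * r * s‖ ≤ ‖p‖ * ‖q‖ * ‖r‖ * ‖s‖ :=
  calc ‖p * q * r * s‖ ≤ ‖p * q * r‖ * ‖s‖ := norm_mul_le _ _
    _ ≤ ‖p * q‖ * ‖r‖ * ‖s‖ := by gcongr; exact norm_mul_le _ _
    _ ≤ ‖p‖ * ‖q‖ * ‖r‖ * ‖s‖ := by gcongr; exact norm_mul_le _ _

omit [PartialOrder A] [StarOrderedRing A] in
lemma aux_norm_mul5 (p q r s u : A) : ‖p * q * r * s * u‖ ≤ ‖p‖ * ‖q‖ * ‖r‖ * ‖s‖ * ‖u‖ :=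
  calc ‖p * q * r * s * u‖ ≤ ‖p * q * r * s‖ * ‖u‖ := norm_mul_le _ _
    _ ≤ ‖p‖ * ‖q‖ * ‖r‖ * ‖s‖ * ‖u‖ := by gcongr; exact aux_norm_mul4 p q r s

lemma aux_rmul4 {a₁ a₂ a₃ a₄ b₁ b₂ b₃ b₄ : ℝ} (h₁ : a₁ ≤ b₁) (h₂ : a₂ ≤ b₂) (h₃ : a₃ ≤ b₃)
    (h₄ : a₄ ≤ b₄) (n₁ : 0 ≤ a₁) (n₂ : 0 ≤ a₂) (n₃ : 0 ≤ a₃) (n₄ : 0 ≤ a₄) :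
    a₁ * a₂ * a₃ * a₄ ≤ b₁ * b₂ * b₃ * b₄ :=
  mul_le_mul (mul_le_mul (mul_le_mul h₁ h₂ n₂ (n₁.trans h₁)) h₃ n₃
    (mul_nonneg (n₁.trans h₁) (n₂.trans h₂))) h₄ n₄
    (mul_nonneg (mul_nonneg (n₁.trans h₁) (n₂.trans h₂)) (n₃.trans h₃))

lemma aux_rmul5 {a₁ a₂ a₃ a₄ a₅ b₁ b₂ b₃ b₄ b₅ : ℝ} (h₁ : a₁ ≤ b₁) (h₂ : a₂ ≤ b₂) (h₃ : a₃ ≤ b₃)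
    (h₄ : a₄ ≤ b₄) (h₅ : a₅ ≤ b₅) (n₁ : 0 ≤ a₁) (n₂ : 0 ≤ a₂) (n₃ : 0 ≤ a₃) (n₄ : 0 ≤ a₄)
    (n₅ : 0 ≤ a₅) : a₁ * a₂ * a₃ * a₄ * a₅ ≤ b₁ * b₂ * b₃ * b₄ * b₅ :=
  mul_le_mul (aux_rmul4 h₁ h₂ h₃ h₄ n₁ n₂ n₃ n₄) h₅ n₅
    (mul_nonneg (mul_nonneg (mul_nonneg (n₁.trans h₁) (n₂.trans h₂)) (n₃.trans h₃)) (n₄.trans h₄))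

end helpers

/-- The key norm estimate in the proof of Corollary 5.11 of the paper: in a unital
C*-algebra, for `‖ξ‖ ≤ 1`, `0 < t < 1` and any `z`,
`‖(1 − t²ξξ*)^{-1/2} (1 − tξξ*) z (1−t)(ξ*ξ) (1 − t²ξ*ξ)^{-1/2}‖
  ≤ (√((1−t)/(1+t)) + t(1−t)/(1+t)) ‖z‖`. -/
theorem stmt11 {A : Type*} [CStarAlgebra A] [PartialOrder A] [StarOrderedRing A]
    (ξ : A) (hξ : ‖ξ‖ ≤ 1) (t : ℝ) (ht0 : 0 < t) (ht1 : t < 1) (z : A) :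
    ‖Ring.inverse (CFC.sqrt (1 - ((t : ℂ) ^ 2) • (ξ * star ξ)))
        * (1 - (t : ℂ) • (ξ * star ξ)) * z * (((1 - t : ℝ) : ℂ) • (star ξ * ξ))
        * Ring.inverse (CFC.sqrt (1 - ((t : ℂ) ^ 2) • (star ξ * ξ)))‖
      ≤ (Real.sqrt ((1 - t) / (1 + t)) + t * (1 - t) / (1 + t)) * ‖z‖ := by
  set a := ξ * star ξ with ha_def
  set b := star ξ * ξ with hb_def
  have ha : 0 ≤ a := mul_star_self_nonneg ξ
  have hb : 0 ≤ b := star_mul_self_nonneg ξ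
  have hna : ‖a‖ ≤ 1 := by
    rw [ha_def, CStarRing.norm_self_mul_star]
    exact mul_le_one₀ hξ (norm_nonneg ξ) hξ
  have hnb : ‖b‖ ≤ 1 := by
    rw [hb_def, CStarRing.norm_star_mul_self]
    exact mul_le_one₀ hξ (norm_nonneg ξ) hξ
  have ha1 : a ≤ 1 := (CStarAlgebra.norm_le_one_iff_of_nonneg a ha).mp hna
  have hb1 : b ≤ 1 := (CStarAlgebra.norm_le_one_iff_of_nonneg b hb).mp hnb
  -- rewrite complex smuls as real smuls
  have ec : ((t : ℂ) ^ 2) = ((t ^ 2 : ℝ) : ℂ) := by push_cast; ring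
  have ec' : (t : ℂ) = ((t : ℝ) : ℂ) := rfl
  rw [ec, Complex.coe_smul, Complex.coe_smul, Complex.coe_smul, Complex.coe_smul]
  set xa : A := 1 - (t ^ 2 : ℝ) • a with hxa_def
  set xb : A := 1 - (t ^ 2 : ℝ) • b with hxb_def
  have ht2 : (0:ℝ) < 1 - t ^ 2 := by nlinarith
  -- lower bounds
  have key : ∀ y : A, 0 ≤ y → y ≤ 1 → algebraMap ℝ A (1 - t ^ 2) ≤ 1 - (t ^ 2 : ℝ) • y := by
    intro y hy hy1
    rw [Algebra.algebraMap_eq_smul_one, sub_smul, one_smul]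
    exact sub_le_sub_left (smul_le_smul_of_nonneg_left hy1 (by positivity)) 1
  have hxa_ge := key a ha ha1
  have hxb_ge := key b hb hb1
  have hmap_nonneg : (0:A) ≤ algebraMap ℝ A (1 - t ^ 2) := by
    rw [Algebra.algebraMap_eq_smul_one]; exact smul_nonneg ht2.le zero_le_one
  have hxa0 : 0 ≤ xa := hmap_nonneg.trans hxa_ge
  have hxb0 : 0 ≤ xb := hmap_nonneg.trans hxb_ge
  have hxa1 : xa ≤ 1 := by
    rw [hxa_def]
    simpa using smul_nonneg (by positivity : (0:ℝ) ≤ t ^ 2) ha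
  set sa := CFC.sqrt xa with hsa_def
  set sb := CFC.sqrt xb with hsb_def
  set P := Ring.inverse sa with hP_def
  set Q := Ring.inverse sb with hQ_def
  have hsa_u : IsUnit sa := aux_isUnit_sqrt hxa0 (aux_isUnit ht2 hxa_ge)
  have hP_norm : ‖P‖ ≤ (Real.sqrt (1 - t ^ 2))⁻¹ := aux_inv_sqrt_norm ht2 hxa0 hxa_ge
  have hQ_norm : ‖Q‖ ≤ (Real.sqrt (1 - t ^ 2))⁻¹ := aux_inv_sqrt_norm ht2 hxb0 hxb_ge
  have hsa_norm : ‖sa‖ ≤ 1 := aux_sqrt_norm_le_one hxa0 hxa1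
  -- the decomposition
  have hPxa : P * xa = sa := by
    rw [hP_def, ← CFC.sqrt_mul_sqrt_self xa hxa0, ← hsa_def, ← mul_assoc,
      Ring.inverse_mul_cancel sa hsa_u, one_mul]
  have hdecomp : P * (1 - (t : ℝ) • a) = sa + (t ^ 2 - t) • (P * a) := by
    have : (1 : A) - (t : ℝ) • a = xa + (t ^ 2 - t) • a := by
      rw [hxa_def, sub_smul]; abel
    rw [this, mul_add, hPxa, mul_smul_comm]
  rw [hdecomp, add_mul, add_mul, add_mul]
  have hsplit : ‖sa * z * ((1 - t : ℝ) • b) * Q + ((t ^ 2 - t) • (P * a)) * z * ((1 - t : ℝ) • b) * Q‖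
      ≤ ‖sa * z * ((1 - t : ℝ) • b) * Q‖ + ‖((t ^ 2 - t) • (P * a)) * z * ((1 - t : ℝ) • b) * Q‖ :=
    norm_add_le _ _
  refine hsplit.trans ?_
  set r := Real.sqrt (1 - t ^ 2) with hr_def
  have hrpos : 0 < r := Real.sqrt_pos.mpr ht2
  have hr2 : r * r = 1 - t ^ 2 := Real.mul_self_sqrt ht2.le
  have hwb : ‖(1 - t : ℝ) • b‖ ≤ (1 - t) * 1 := by
    rw [norm_smul, Real.norm_eq_abs, abs_of_nonneg (by linarith)]
    exact mul_le_mul_of_nonneg_left hnb (by linarith)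
  have hT1 : ‖sa * z * ((1 - t : ℝ) • b) * Q‖ ≤ 1 * ‖z‖ * ((1 - t) * 1) * r⁻¹ := by
    refine (aux_norm_mul4 sa z _ Q).trans ?_
    exact aux_rmul4 hsa_norm le_rfl hwb hQ_norm (norm_nonneg _) (norm_nonneg _)
      (norm_nonneg _) (norm_nonneg _)
  have hT2 : ‖((t ^ 2 - t) • (P * a)) * z * ((1 - t : ℝ) • b) * Q‖
      ≤ (t - t ^ 2) * (r⁻¹ * 1 * ‖z‖ * ((1 - t) * 1) * r⁻¹) := by
    rw [smul_mul_assoc, smul_mul_assoc, smul_mul_assoc, norm_smul, Real.norm_eq_abs,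
      abs_of_nonpos (by nlinarith), neg_sub]
    have hin : 0 ≤ t - t ^ 2 := by nlinarith
    refine mul_le_mul le_rfl ((aux_norm_mul5 P a z _ Q).trans ?_) (norm_nonneg _) hin
    exact aux_rmul5 hP_norm hna le_rfl hwb hQ_norm (norm_nonneg _) (norm_nonneg _)
      (norm_nonneg _) (norm_nonneg _) (norm_nonneg _)
  refine (add_le_add hT1 hT2).trans ?_
  have hsqeq : Real.sqrt ((1 - t) / (1 + t)) = (1 - t) * r⁻¹ := by
    rw [show (1 - t) / (1 + t) = (1 - t) ^ 2 / (1 - t ^ 2) by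
      rw [div_eq_div_iff (by linarith) (by linarith)]; ring]
    rw [hr_def, Real.sqrt_div (by positivity), Real.sqrt_sq (by linarith), div_eq_mul_inv]
  rw [hsqeq, add_mul]
  have hE2 : (t - t ^ 2) * (r⁻¹ * 1 * ‖z‖ * ((1 - t) * 1) * r⁻¹)
      = t * (1 - t) / (1 + t) * ‖z‖ := by
    have h1t : (1 + t) ≠ 0 := by linarith
    have h1t' : (1 - t) ≠ 0 := by linarith
    have hrr : r⁻¹ * r⁻¹ = ((1 - t) * (1 + t))⁻¹ := by
      rw [← mul_inv, hr2]; ring_nf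
    calc (t - t ^ 2) * (r⁻¹ * 1 * ‖z‖ * ((1 - t) * 1) * r⁻¹)
        = (t - t ^ 2) * (1 - t) * ‖z‖ * (r⁻¹ * r⁻¹) := by ring
      _ = (t - t ^ 2) * (1 - t) * ‖z‖ * ((1 - t) * (1 + t))⁻¹ := by rw [hrr]
      _ = t * (1 - t) / (1 + t) * ‖z‖ := by field_simp
  rw [hE2]
  exact add_le_add_left (le_of_eq (by ring)) _
end

section
/- Let Ω be a nonempty compact Hausdorff space and C(Ω) the Banach space of continuous complex-valued functions on Ω with the supremum norm. Let (z_k) be a sequence in C(Ω) with ‖z_k‖ < 1 for all k, converging uniformly to ξ ∈ C(Ω), and let x ∈ C(Ω) with ‖x‖ < 1. Then limsup_{k→∞} sup_{ω ∈ Ω} ( |1 − x(ω) · conj(z_k(ω))|² · (1 − ‖z_k‖²) ) / ( (1 − |x(ω)|²) · (1 − |z_k(ω)|²) ) = limsup_{k→∞} sup_{ω ∈ Ω} ( |1 − x(ω) · conj(ξ(ω))|² · (1 − ‖z_k‖²) ) / ( (1 − |x(ω)|²) · (1 − |z_k(ω)|²) ). -/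
open Filter

private lemma limsup_le_aux12 {F G δ : ℕ → ℝ} {M : ℝ}
    (hF0 : ∀ k, 0 ≤ F k) (hG0 : ∀ k, 0 ≤ G k) (hGM : ∀ k, G k ≤ M)
    (hδ : Tendsto δ atTop (nhds 0)) (h : ∀ k, F k ≤ G k + δ k) :
    limsup F atTop ≤ limsup G atTop := by
  have hGb : IsBoundedUnder (· ≤ ·) atTop G := isBoundedUnder_of ⟨M, hGM⟩
  have hGc : IsCoboundedUnder (· ≤ ·) atTop G :=
    (isBoundedUnder_of (r := (· ≥ ·)) ⟨0, hG0⟩).isCoboundedUnder_le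
  have hFc : IsCoboundedUnder (· ≤ ·) atTop F :=
    (isBoundedUnder_of (r := (· ≥ ·)) ⟨0, hF0⟩).isCoboundedUnder_le
  refine le_of_forall_pos_le_add fun ε hε => ?_
  have hev : ∀ᶠ k in atTop, F k ≤ G k + ε := by
    filter_upwards [hδ.eventually_lt_const hε] with k hk
    linarith [h k]
  calc limsup F atTop ≤ limsup (fun k => G k + ε) atTop :=
        limsup_le_limsup hev hFc
          (isBoundedUnder_of ⟨M + ε, fun k => by linarith [hGM k]⟩)
    _ = limsup G atTop + ε := limsup_add_const atTop G ε hGb hGc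

/-- Example 2.8 of the paper, for the JB*-triple `C(Ω)`: if `(z_k)` lies in the open unit
ball of `C(Ω)` and converges uniformly to `ξ`, and `‖x‖ < 1`, then the two `limsup`s
defining the horoball function (with `z_k` resp. `ξ` in the numerator) coincide. -/
theorem stmt12 {Ω : Type*} [TopologicalSpace Ω] [CompactSpace Ω] [T2Space Ω] [Nonempty Ω]
    (z : ℕ → C(Ω, ℂ)) (hz : ∀ k, ‖z k‖ < 1) (ξ : C(Ω, ℂ))
    (hconv : Tendsto z atTop (nhds ξ)) (x : C(Ω, ℂ)) (hx : ‖x‖ < 1) :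
    limsup (fun k => ⨆ ω : Ω,
        (‖1 - x ω * (starRingEnd ℂ) (z k ω)‖ ^ 2 * (1 - ‖z k‖ ^ 2)) /
          ((1 - ‖x ω‖ ^ 2) * (1 - ‖z k ω‖ ^ 2))) atTop
      = limsup (fun k => ⨆ ω : Ω,
        (‖1 - x ω * (starRingEnd ℂ) (ξ ω)‖ ^ 2 * (1 - ‖z k‖ ^ 2)) /
          ((1 - ‖x ω‖ ^ 2) * (1 - ‖z k ω‖ ^ 2))) atTop := by
  -- basic positivity facts
  have hx0 : (0:ℝ) ≤ ‖x‖ := norm_nonneg x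
  have hx2 : 0 < 1 - ‖x‖ ^ 2 := by nlinarith
  have hξ1 : ‖ξ‖ ≤ 1 :=
    le_of_tendsto (hconv.norm) (Eventually.of_forall fun k => (hz k).le)
  set M : ℝ := 4 / (1 - ‖x‖ ^ 2) with hM
  set f : ℕ → Ω → ℝ := fun k ω =>
    (‖1 - x ω * (starRingEnd ℂ) (z k ω)‖ ^ 2 * (1 - ‖z k‖ ^ 2)) /
      ((1 - ‖x ω‖ ^ 2) * (1 - ‖z k ω‖ ^ 2)) with hf
  set g : ℕ → Ω → ℝ := fun k ω =>
    (‖1 - x ω * (starRingEnd ℂ) (ξ ω)‖ ^ 2 * (1 - ‖z k‖ ^ 2)) /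
      ((1 - ‖x ω‖ ^ 2) * (1 - ‖z k ω‖ ^ 2)) with hg
  -- pointwise norm bounds
  have hxω : ∀ ω : Ω, ‖x ω‖ ≤ ‖x‖ := fun ω => x.norm_coe_le_norm ω
  have hzω : ∀ k (ω : Ω), ‖z k ω‖ ≤ ‖z k‖ := fun k ω => (z k).norm_coe_le_norm ω
  have hξω : ∀ ω : Ω, ‖ξ ω‖ ≤ 1 := fun ω => (ξ.norm_coe_le_norm ω).trans hξ1
  have hA : ∀ (u v : ℂ), ‖u‖ ≤ 1 → ‖v‖ ≤ 1 → ‖1 - u * (starRingEnd ℂ) v‖ ≤ 2 := by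
    intro u v hu hv
    calc ‖1 - u * (starRingEnd ℂ) v‖ ≤ ‖(1:ℂ)‖ + ‖u * (starRingEnd ℂ) v‖ := norm_sub_le _ _
      _ ≤ 2 := by
          rw [norm_one, norm_mul, RCLike.norm_conj]
          nlinarith [norm_nonneg u, norm_nonneg v]
  -- denominator bounds
  have hzk2 : ∀ k, 0 < 1 - ‖z k‖ ^ 2 := fun k => by nlinarith [norm_nonneg (z k), hz k]
  have hdenlb : ∀ k (ω : Ω),
      (1 - ‖x‖ ^ 2) * (1 - ‖z k‖ ^ 2) ≤ (1 - ‖x ω‖ ^ 2) * (1 - ‖z k ω‖ ^ 2) := by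
    intro k ω
    have h1 : 1 - ‖x‖ ^ 2 ≤ 1 - ‖x ω‖ ^ 2 := by
      nlinarith [hxω ω, norm_nonneg (x ω)]
    have h2 : 1 - ‖z k‖ ^ 2 ≤ 1 - ‖z k ω‖ ^ 2 := by
      nlinarith [hzω k ω, norm_nonneg (z k ω)]
    exact mul_le_mul h1 h2 (hzk2 k).le (by linarith)
  have hdenpos : ∀ k (ω : Ω), 0 < (1 - ‖x ω‖ ^ 2) * (1 - ‖z k ω‖ ^ 2) :=
    fun k ω => lt_of_lt_of_le (mul_pos hx2 (hzk2 k)) (hdenlb k ω)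
  -- bounds on f and g
  have hf0 : ∀ k ω, 0 ≤ f k ω := fun k ω =>
    div_nonneg (mul_nonneg (by positivity) (hzk2 k).le) (hdenpos k ω).le
  have hg0 : ∀ k ω, 0 ≤ g k ω := fun k ω =>
    div_nonneg (mul_nonneg (by positivity) (hzk2 k).le) (hdenpos k ω).le
  have keybound : ∀ (k : ℕ) (ω : Ω) (a : ℝ), 0 ≤ a →
      a * (1 - ‖z k‖ ^ 2) / ((1 - ‖x ω‖ ^ 2) * (1 - ‖z k ω‖ ^ 2)) ≤ a / (1 - ‖x‖ ^ 2) := by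
    intro k ω a ha0
    have h1 : a * (1 - ‖z k‖ ^ 2) / ((1 - ‖x ω‖ ^ 2) * (1 - ‖z k ω‖ ^ 2)) ≤
        a * (1 - ‖z k‖ ^ 2) / ((1 - ‖x‖ ^ 2) * (1 - ‖z k‖ ^ 2)) :=
      div_le_div_of_nonneg_left (mul_nonneg ha0 (hzk2 k).le)
        (mul_pos hx2 (hzk2 k)) (hdenlb k ω)
    have h2 : a * (1 - ‖z k‖ ^ 2) / ((1 - ‖x‖ ^ 2) * (1 - ‖z k‖ ^ 2)) =
        a / (1 - ‖x‖ ^ 2) :=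
      mul_div_mul_right a (1 - ‖x‖ ^ 2) (hzk2 k).ne'
    linarith
  have hnum4 : ∀ k ω, ‖1 - x ω * (starRingEnd ℂ) (z k ω)‖ ^ 2 ≤ 4 := by
    intro k ω
    have := hA (x ω) (z k ω) ((hxω ω).trans hx.le) ((hzω k ω).trans (hz k).le)
    nlinarith [norm_nonneg (1 - x ω * (starRingEnd ℂ) (z k ω))]
  have hnumξ4 : ∀ ω : Ω, ‖1 - x ω * (starRingEnd ℂ) (ξ ω)‖ ^ 2 ≤ 4 := by
    intro ω
    have := hA (x ω) (ξ ω) ((hxω ω).trans hx.le) (hξω ω)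
    nlinarith [norm_nonneg (1 - x ω * (starRingEnd ℂ) (ξ ω))]
  have hfM : ∀ k ω, f k ω ≤ M := fun k ω => by
    refine (keybound k ω _ (by positivity)).trans ?_
    exact (div_le_div_iff_of_pos_right hx2).mpr (hnum4 k ω)
  have hgM : ∀ k ω, g k ω ≤ M := fun k ω => by
    refine (keybound k ω _ (by positivity)).trans ?_
    exact (div_le_div_iff_of_pos_right hx2).mpr (hnumξ4 ω)
  -- pointwise difference bound
  set δ : ℕ → ℝ := fun k => 4 * ‖z k - ξ‖ / (1 - ‖x‖ ^ 2) with hδdef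
  have hδ0 : ∀ k, 0 ≤ δ k := fun k => by positivity
  have hdiff : ∀ k ω, |f k ω - g k ω| ≤ δ k := by
    intro k ω
    set A : ℂ := 1 - x ω * (starRingEnd ℂ) (z k ω) with hAdef
    set B : ℂ := 1 - x ω * (starRingEnd ℂ) (ξ ω) with hBdef
    have hAB : ‖A - B‖ ≤ ‖z k - ξ‖ := by
      have : A - B = x ω * ((starRingEnd ℂ) (ξ ω) - (starRingEnd ℂ) (z k ω)) := by
        rw [hAdef, hBdef]; ring
      rw [this, norm_mul, ← map_sub, RCLike.norm_conj]
      calc ‖x ω‖ * ‖ξ ω - z k ω‖ ≤ 1 * ‖(z k - ξ) ω‖ := by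
            rw [norm_sub_rev]
            have h1 : ‖(z k - ξ) ω‖ = ‖z k ω - ξ ω‖ := by simp
            rw [h1]
            exact mul_le_mul_of_nonneg_right ((hxω ω).trans hx.le) (norm_nonneg _) |>.trans
              (by rw [one_mul])
        _ ≤ ‖z k - ξ‖ := by rw [one_mul]; exact (z k - ξ).norm_coe_le_norm ω
    have hAn : ‖A‖ ≤ 2 := hA (x ω) (z k ω) ((hxω ω).trans hx.le) ((hzω k ω).trans (hz k).le)
    have hBn : ‖B‖ ≤ 2 := hA (x ω) (ξ ω) ((hxω ω).trans hx.le) (hξω ω)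
    have hab : |‖A‖ ^ 2 - ‖B‖ ^ 2| ≤ 4 * ‖z k - ξ‖ := by
      have h1 : |‖A‖ - ‖B‖| ≤ ‖A - B‖ := abs_norm_sub_norm_le A B
      have h2 : ‖A‖ ^ 2 - ‖B‖ ^ 2 = (‖A‖ - ‖B‖) * (‖A‖ + ‖B‖) := by ring
      rw [h2, abs_mul]
      have h3 : |‖A‖ + ‖B‖| ≤ 4 := by
        rw [abs_of_nonneg (by positivity)]; linarith
      nlinarith [abs_nonneg (‖A‖ - ‖B‖), abs_nonneg (‖A‖ + ‖B‖), h1.trans hAB,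
        norm_nonneg (A - B), norm_nonneg (z k - ξ)]
    have hfg : f k ω - g k ω =
        (‖A‖ ^ 2 - ‖B‖ ^ 2) * (1 - ‖z k‖ ^ 2) /
          ((1 - ‖x ω‖ ^ 2) * (1 - ‖z k ω‖ ^ 2)) := by
      rw [hf, hg]
      field_simp
      ring
    rw [hfg, abs_div, abs_mul, abs_of_pos (hdenpos k ω), abs_of_pos (hzk2 k)]
    calc |‖A‖ ^ 2 - ‖B‖ ^ 2| * (1 - ‖z k‖ ^ 2) / ((1 - ‖x ω‖ ^ 2) * (1 - ‖z k ω‖ ^ 2))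
        ≤ |‖A‖ ^ 2 - ‖B‖ ^ 2| / (1 - ‖x‖ ^ 2) :=
          keybound k ω _ (abs_nonneg _)
      _ ≤ δ k := (div_le_div_iff_of_pos_right hx2).mpr hab
  -- sup-level quantities
  set F : ℕ → ℝ := fun k => ⨆ ω : Ω, f k ω with hF
  set G : ℕ → ℝ := fun k => ⨆ ω : Ω, g k ω with hG
  have hbddf : ∀ k, BddAbove (Set.range (f k)) := fun k =>
    ⟨M, by rintro _ ⟨ω, rfl⟩; exact hfM k ω⟩
  have hbddg : ∀ k, BddAbove (Set.range (g k)) := fun k =>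
    ⟨M, by rintro _ ⟨ω, rfl⟩; exact hgM k ω⟩
  obtain ⟨ω₀⟩ := ‹Nonempty Ω›
  have hF0 : ∀ k, 0 ≤ F k := fun k => (hf0 k ω₀).trans (le_ciSup (hbddf k) ω₀)
  have hG0 : ∀ k, 0 ≤ G k := fun k => (hg0 k ω₀).trans (le_ciSup (hbddg k) ω₀)
  have hFM : ∀ k, F k ≤ M := fun k => ciSup_le fun ω => hfM k ω
  have hGM : ∀ k, G k ≤ M := fun k => ciSup_le fun ω => hgM k ω
  have hFG : ∀ k, F k ≤ G k + δ k := fun k => ciSup_le fun ω => by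
    have h1 := (abs_sub_le_iff.mp (hdiff k ω)).1
    have h2 : g k ω ≤ G k := le_ciSup (hbddg k) ω
    linarith
  have hGF : ∀ k, G k ≤ F k + δ k := fun k => ciSup_le fun ω => by
    have h1 := (abs_sub_le_iff.mp (hdiff k ω)).2
    have h2 : f k ω ≤ F k := le_ciSup (hbddf k) ω
    linarith
  have hδ : Tendsto δ atTop (nhds 0) := by
    have h1 : Tendsto (fun k => ‖z k - ξ‖) atTop (nhds 0) := by
      rw [← tendsto_sub_nhds_zero_iff] at hconv
      simpa using hconv.norm
    have := (h1.const_mul 4).div_const (1 - ‖x‖ ^ 2)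
    simpa [hδdef] using this
  exact le_antisymm (limsup_le_aux12 hF0 hG0 hGM hδ hFG)
    (limsup_le_aux12 hG0 hF0 hFM hδ hGF)
end

section
/- Let H be a complex Hilbert space and let B(H) = L(H,H) denote the bounded linear operators on H. Let (z_k) be a sequence in B(H) with ‖z_k‖ < 1 for all k, converging in norm to ξ ∈ B(H) with ‖ξ‖ ≤ 1. For ‖x‖ < 1 and ‖z‖ < 1 in B(H), let Φ(x,z) denote the bounded linear map on B(H) given by w ↦ (1 − x x*)^{-1/2} (1 − x z*) (1 − z z*)^{-1/2} · w · (1 − z* z)^{-1/2} (1 − z* x) (1 − x* x)^{-1/2}. Then: (a) for every x ∈ B(H) with ‖x‖ < 1, the real sequence ( (1 − ‖z_k‖²) · ‖Φ(x, z_k)‖ )_k is bounded (indeed bounded by (1 + ‖x‖)/(1 − ‖x‖)), so that F(x) := limsup_k (1 − ‖z_k‖²) ‖Φ(x, z_k)‖ is a well-defined real number; and (b) the function F is continuous on the open unit ball {x ∈ B(H) : ‖x‖ < 1}. -/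
set_option maxHeartbeats 1000000

open Filter ContinuousLinearMap

/-- The operator `Φ(x,z) = B(x,x)^{-1/2} B(x,z) B(z,z)^{-1/2}` on `B(H)`:
`w ↦ (1−xx*)^{-1/2}(1−xz*)(1−zz*)^{-1/2} · w · (1−z*z)^{-1/2}(1−z*x)(1−x*x)^{-1/2}`,
where square roots are taken via the continuous functional calculus. -/
noncomputable def Phi {H : Type*} [NormedAddCommGroup H] [InnerProductSpace ℂ H]
    [CompleteSpace H] (x z : H →L[ℂ] H) : (H →L[ℂ] H) →L[ℂ] (H →L[ℂ] H) :=
  ContinuousLinearMap.mulLeftRight ℂ (H →L[ℂ] H)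
    (Ring.inverse (CFC.sqrt (1 - x * star x)) * (1 - x * star z)
      * Ring.inverse (CFC.sqrt (1 - z * star z)))
    (Ring.inverse (CFC.sqrt (1 - star z * z)) * (1 - star z * x)
      * Ring.inverse (CFC.sqrt (1 - star x * x)))

section Aux

set_option linter.unusedSectionVars false

variable {H : Type*} [NormedAddCommGroup H] [InnerProductSpace ℂ H] [CompleteSpace H]
  [Nontrivial H]

noncomputable def isq {H : Type*} [NormedAddCommGroup H] [InnerProductSpace ℂ H]
    [CompleteSpace H] (a : H →L[ℂ] H) : H →L[ℂ] H :=
  cfc (fun t : ℝ => (Real.sqrt (1 - t))⁻¹) a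

lemma spec_sub {a : H →L[ℂ] H} (ha : 0 ≤ a) : spectrum ℝ a ⊆ Set.Icc 0 ‖a‖ := by
  intro t ht
  refine ⟨spectrum_nonneg_of_nonneg ha ht, ?_⟩
  simpa [Real.norm_eq_abs, abs_of_nonneg (spectrum_nonneg_of_nonneg ha ht)] using
    spectrum.norm_le_norm_of_mem ht

lemma isq_eq {a : H →L[ℂ] H} (ha : 0 ≤ a) (h1 : ‖a‖ < 1) :
    Ring.inverse (CFC.sqrt (1 - a)) = isq a := by
  have hsa : IsSelfAdjoint a := .of_nonneg ha
  have hsp := spec_sub ha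
  have hlt : ∀ t ∈ spectrum ℝ a, 0 < 1 - t := fun t ht =>
    sub_pos.mpr ((hsp ht).2.trans_lt h1)
  have hcont : ContinuousOn (fun t : ℝ => Real.sqrt (1 - t)) (spectrum ℝ a) :=
    ((continuous_const.sub continuous_id).sqrt).continuousOn
  have hmul : (cfc (fun t : ℝ => Real.sqrt (1 - t)) a) *
      (cfc (fun t : ℝ => Real.sqrt (1 - t)) a) = 1 - a := by
    rw [← cfc_mul _ _ a hcont hcont]
    have : cfc (fun t : ℝ => Real.sqrt (1 - t) * Real.sqrt (1 - t)) a
        = cfc (fun t : ℝ => 1 - t) a := by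
      refine cfc_congr fun t ht => ?_
      exact Real.mul_self_sqrt (hlt t ht).le
    rw [this, cfc_sub _ _ a, cfc_const_one ℝ a, cfc_id' ℝ a]
  have hnn : (0:H →L[ℂ] H) ≤ cfc (fun t : ℝ => Real.sqrt (1 - t)) a :=
    cfc_nonneg fun t _ => Real.sqrt_nonneg _
  have hsqrt : CFC.sqrt (1 - a) = cfc (fun t : ℝ => Real.sqrt (1 - t)) a :=
    CFC.sqrt_unique hmul hnn
  rw [hsqrt, ← cfc_inv _ a (fun t ht => (Real.sqrt_pos.mpr (hlt t ht)).ne')]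
  rfl

lemma norm_isq_le {a : H →L[ℂ] H} (ha : 0 ≤ a) {r : ℝ} (har : ‖a‖ ≤ r) (hr : r < 1) :
    ‖isq a‖ ≤ (Real.sqrt (1 - r))⁻¹ := by
  have hsa : IsSelfAdjoint a := .of_nonneg ha
  refine norm_cfc_le (by positivity) fun t ht => ?_
  obtain ⟨h0, h2⟩ := spec_sub ha ht
  have h2r : t ≤ r := h2.trans har
  rw [Real.norm_eq_abs, abs_of_nonneg (by positivity)]
  exact inv_anti₀ (Real.sqrt_pos.mpr (by linarith)) (Real.sqrt_le_sqrt (by linarith))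

lemma continuousOn_isq :
    ContinuousOn (isq (H := H)) {a : H →L[ℂ] H | 0 ≤ a ∧ ‖a‖ < 1} := by
  rintro a₀ ⟨ha₀, h₀⟩
  set r : ℝ := (1 + ‖a₀‖) / 2 with hrdef
  have hr1 : r < 1 := by rw [hrdef]; linarith
  have hr0 : ‖a₀‖ < r := by rw [hrdef]; linarith
  have hrpos : (0:ℝ) < 1 - r := by linarith
  have hgc : ContinuousOn (fun t : ℝ => (Real.sqrt (1 - t))⁻¹) (Set.Icc 0 r) := by
    refine ContinuousOn.inv₀ ((continuous_const.sub continuous_id).sqrt).continuousOn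
      fun t ht => ?_
    exact (Real.sqrt_pos.mpr (by linarith [ht.2])).ne'
  rw [Metric.continuousWithinAt_iff]
  intro ε hε
  obtain ⟨q, hq⟩ := exists_polynomial_near_of_continuousOn 0 r _ hgc (ε/4) (by linarith)
  have hcq : ContinuousAt (fun a : H →L[ℂ] H => Polynomial.aeval a q) a₀ :=
    q.continuousAt_aeval
  rw [Metric.continuousAt_iff] at hcq
  obtain ⟨δ₁, hδ₁, hballq⟩ := hcq (ε/4) (by linarith)
  refine ⟨min δ₁ (r - ‖a₀‖), lt_min hδ₁ (by linarith), ?_⟩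
  rintro a ⟨ha, h1⟩ hdist
  have hdist1 : dist a a₀ < δ₁ := hdist.trans_le (min_le_left _ _)
  have hnorm_a : ‖a‖ ≤ r := by
    have := norm_sub_norm_le a a₀
    rw [dist_eq_norm] at hdist
    have := hdist.trans_le (min_le_right _ _)
    linarith [norm_sub_norm_le a a₀]
  -- key approximation estimate, for any b in the set with ‖b‖ ≤ r
  have key : ∀ b : H →L[ℂ] H, 0 ≤ b → ‖b‖ ≤ r →
      ‖isq b - Polynomial.aeval b q‖ ≤ ε/4 := by
    intro b hb hbr
    have hsb : IsSelfAdjoint b := .of_nonneg hb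
    have hspb : spectrum ℝ b ⊆ Set.Icc 0 r := fun t ht =>
      ⟨(spec_sub hb ht).1, (spec_sub hb ht).2.trans hbr⟩
    have hgcb : ContinuousOn (fun t : ℝ => (Real.sqrt (1 - t))⁻¹) (spectrum ℝ b) :=
      hgc.mono hspb
    rw [← cfc_polynomial q b, isq,
      ← cfc_sub (fun t : ℝ => (Real.sqrt (1 - t))⁻¹) (fun t : ℝ => q.eval t) b hgcb
        q.continuous.continuousOn]
    refine norm_cfc_le (by linarith) fun t ht => ?_
    rw [Real.norm_eq_abs, abs_sub_comm]
    exact (hq t (hspb ht)).le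
  have e1 := key a ha hnorm_a
  have e2 := key a₀ ha₀ hr0.le
  have e3 := hballq hdist1
  rw [dist_eq_norm] at e3 ⊢
  have t1 : ‖isq a - isq a₀‖ ≤ ‖isq a - Polynomial.aeval a q‖
      + ‖Polynomial.aeval a q - isq a₀‖ := norm_sub_le_norm_sub_add_norm_sub _ _ _
  have t2 : ‖Polynomial.aeval a q - isq a₀‖ ≤ ‖Polynomial.aeval a q - Polynomial.aeval a₀ q‖
      + ‖Polynomial.aeval a₀ q - isq a₀‖ := norm_sub_le_norm_sub_add_norm_sub _ _ _
  rw [norm_sub_rev] at e2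
  linarith

lemma norm_mul_star_self (x : H →L[ℂ] H) : ‖x * star x‖ = ‖x‖ ^ 2 := by
  rw [CStarRing.norm_self_mul_star, sq]

lemma norm_star_mul_self' (x : H →L[ℂ] H) : ‖star x * x‖ = ‖x‖ ^ 2 := by
  rw [CStarRing.norm_star_mul_self, sq]

lemma phi_eq {x z : H →L[ℂ] H} (hx : ‖x‖ < 1) (hz : ‖z‖ < 1) :
    Phi x z = ContinuousLinearMap.mulLeftRight ℂ (H →L[ℂ] H)
      (isq (x * star x) * (1 - x * star z) * isq (z * star z))
      (isq (star z * z) * (1 - star z * x) * isq (star x * x)) := by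
  have h1 : ‖x‖ ^ 2 < 1 := by nlinarith [norm_nonneg x]
  have h2 : ‖z‖ ^ 2 < 1 := by nlinarith [norm_nonneg z]
  rw [Phi, isq_eq (mul_star_self_nonneg x) (by rw [norm_mul_star_self]; exact h1),
    isq_eq (mul_star_self_nonneg z) (by rw [norm_mul_star_self]; exact h2),
    isq_eq (star_mul_self_nonneg x) (by rw [norm_star_mul_self']; exact h1),
    isq_eq (star_mul_self_nonneg z) (by rw [norm_star_mul_self']; exact h2)]

lemma norm_triple {a b c : H →L[ℂ] H} : ‖a * b * c‖ ≤ ‖a‖ * ‖b‖ * ‖c‖ :=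
  (norm_mul_le _ _).trans (mul_le_mul_of_nonneg_right (norm_mul_le a b) (norm_nonneg c))

lemma norm_isq_sq {x : H →L[ℂ] H} (hx : ‖x‖ < 1) :
    ‖isq (x * star x)‖ ≤ (Real.sqrt (1 - ‖x‖ ^ 2))⁻¹ ∧
    ‖isq (star x * x)‖ ≤ (Real.sqrt (1 - ‖x‖ ^ 2))⁻¹ := by
  have h1 : ‖x‖ ^ 2 < 1 := by nlinarith [norm_nonneg x]
  exact ⟨norm_isq_le (mul_star_self_nonneg x) (norm_mul_star_self x).le h1,
    norm_isq_le (star_mul_self_nonneg x) (norm_star_mul_self' x).le h1⟩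

lemma bound_a {x z : H →L[ℂ] H} (hx : ‖x‖ < 1) (hz : ‖z‖ < 1) :
    (1 - ‖z‖ ^ 2) * ‖Phi x z‖ ≤ (1 + ‖x‖) / (1 - ‖x‖) := by
  have hx0 := norm_nonneg x
  have hz0 := norm_nonneg z
  have h1 : ‖x‖ ^ 2 < 1 := by nlinarith
  have h2 : ‖z‖ ^ 2 < 1 := by nlinarith
  set sx := (Real.sqrt (1 - ‖x‖ ^ 2))⁻¹ with hsx
  set sz := (Real.sqrt (1 - ‖z‖ ^ 2))⁻¹ with hsz
  have hsx0 : 0 ≤ sx := by positivity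
  have hsz0 : 0 ≤ sz := by positivity
  have hone : ‖(1 : H →L[ℂ] H)‖ = 1 := norm_one
  have hmid1 : ‖1 - x * star z‖ ≤ 1 + ‖x‖ := by
    refine (norm_sub_le _ _).trans ?_
    rw [hone]
    have : ‖x * star z‖ ≤ ‖x‖ * ‖z‖ := (norm_mul_le _ _).trans_eq (by rw [norm_star])
    nlinarith
  have hmid2 : ‖1 - star z * x‖ ≤ 1 + ‖x‖ := by
    refine (norm_sub_le _ _).trans ?_
    rw [hone]
    have : ‖star z * x‖ ≤ ‖z‖ * ‖x‖ := (norm_mul_le _ _).trans_eq (by rw [norm_star])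
    nlinarith
  have hA : ‖isq (x * star x) * (1 - x * star z) * isq (z * star z)‖ ≤ sx * (1 + ‖x‖) * sz := by
    refine norm_triple.trans ?_
    have := (norm_isq_sq hx).1
    have := (norm_isq_sq hz).1
    have h1x : (0:ℝ) ≤ 1 + ‖x‖ := by linarith
    exact mul_le_mul (mul_le_mul (by assumption) hmid1 (norm_nonneg _) hsx0)
      (by assumption) (norm_nonneg _) (by positivity)
  have hB : ‖isq (star z * z) * (1 - star z * x) * isq (star x * x)‖ ≤ sz * (1 + ‖x‖) * sx := by
    refine norm_triple.trans ?_
    have := (norm_isq_sq hx).2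
    have := (norm_isq_sq hz).2
    exact mul_le_mul (mul_le_mul (by assumption) hmid2 (norm_nonneg _) hsz0)
      (by assumption) (norm_nonneg _) (by positivity)
  have hPhi : ‖Phi x z‖ ≤ (sx * (1 + ‖x‖) * sz) * (sz * (1 + ‖x‖) * sx) := by
    rw [phi_eq hx hz]
    refine (ContinuousLinearMap.opNorm_mulLeftRight_apply_apply_le ℂ _ _ _).trans ?_
    exact mul_le_mul hA hB (norm_nonneg _) (by positivity)
  have hzpos : (0:ℝ) < 1 - ‖z‖ ^ 2 := by linarith
  have hsx2 : sx * sx = (1 - ‖x‖ ^ 2)⁻¹ := by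
    rw [hsx, ← mul_inv, Real.mul_self_sqrt (by linarith)]
  have hsz2 : sz * sz = (1 - ‖z‖ ^ 2)⁻¹ := by
    rw [hsz, ← mul_inv, Real.mul_self_sqrt (by linarith)]
  calc (1 - ‖z‖ ^ 2) * ‖Phi x z‖
      ≤ (1 - ‖z‖ ^ 2) * ((sx * (1 + ‖x‖) * sz) * (sz * (1 + ‖x‖) * sx)) := by
        exact mul_le_mul_of_nonneg_left hPhi hzpos.le
    _ = (sx * sx) * ((1 - ‖z‖ ^ 2) * (sz * sz)) * (1 + ‖x‖) ^ 2 := by ring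
    _ = (1 - ‖x‖ ^ 2)⁻¹ * 1 * (1 + ‖x‖) ^ 2 := by
        rw [hsx2, hsz2, mul_inv_cancel₀ hzpos.ne']
    _ = (1 + ‖x‖) / (1 - ‖x‖) := by
        have hne1 : (1:ℝ) - ‖x‖ ≠ 0 := by nlinarith
        have hne3 : (1:ℝ) - ‖x‖ ^ 2 ≠ 0 := by nlinarith
        rw [mul_one, inv_mul_eq_div, div_eq_div_iff hne3 hne1]
        ring

noncomputable def Del {H : Type*} [NormedAddCommGroup H] [InnerProductSpace ℂ H]
    [CompleteSpace H] (x y : H →L[ℂ] H) : ℝ :=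
  (2 * ‖isq (x * star x) - isq (y * star y)‖ + ‖isq (y * star y)‖ * ‖x - y‖)
      * (2 * ‖isq (star x * x)‖)
    + (2 * ‖isq (y * star y)‖)
      * (2 * ‖isq (star x * x) - isq (star y * y)‖ + ‖x - y‖ * ‖isq (star y * y)‖)

lemma ring_iden {R : Type*} [Ring R] (a b q x y zs : R) :
    a * (1 - x * zs) * q - b * (1 - y * zs) * q
      = ((a - b) * (1 - x * zs) + b * ((y - x) * zs)) * q := by noncomm_ring

lemma ring_iden'' {R : Type*} [Ring R] (a b c d w : R) :
    a * w * c - b * w * d = (a - b) * w * c + b * w * (c - d) := by noncomm_ring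

lemma ring_iden' {R : Type*} [Ring R] (a b q zs x y : R) :
    q * (1 - zs * x) * a - q * (1 - zs * y) * b
      = q * ((1 - zs * x) * (a - b) + zs * (y - x) * b) := by noncomm_ring

lemma bound_diff {x y z : H →L[ℂ] H} (hx : ‖x‖ < 1) (hy : ‖y‖ < 1) (hz : ‖z‖ < 1) :
    (1 - ‖z‖ ^ 2) * ‖Phi x z - Phi y z‖ ≤ Del x y := by
  have hx0 := norm_nonneg x
  have hz0 := norm_nonneg z
  have hy0 := norm_nonneg y
  have h2 : ‖z‖ ^ 2 < 1 := by nlinarith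
  unfold Del
  have hone : ‖(1 : H →L[ℂ] H)‖ = 1 := norm_one
  have two_bound : ∀ u v : H →L[ℂ] H, ‖u‖ < 1 → ‖v‖ < 1 → ‖1 - u * star v‖ ≤ 2 := by
    intro u v hu hv
    refine (norm_sub_le _ _).trans ?_
    rw [hone]
    have : ‖u * star v‖ ≤ ‖u‖ * ‖v‖ := (norm_mul_le _ _).trans_eq (by rw [norm_star])
    nlinarith [norm_nonneg u, norm_nonneg v]
  have two_bound' : ∀ u v : H →L[ℂ] H, ‖u‖ < 1 → ‖v‖ < 1 → ‖1 - star u * v‖ ≤ 2 := by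
    intro u v hu hv
    refine (norm_sub_le _ _).trans ?_
    rw [hone]
    have : ‖star u * v‖ ≤ ‖u‖ * ‖v‖ := by
      refine (norm_mul_le _ _).trans_eq ?_; rw [norm_star]
    nlinarith [norm_nonneg u, norm_nonneg v]
  have hb1 := two_bound x z hx hz
  have hb2 := two_bound y z hy hz
  have hb3 := two_bound' z x hz hx
  have hb4 := two_bound' z y hz hy
  set sz := (Real.sqrt (1 - ‖z‖ ^ 2))⁻¹ with hsz
  have hsz0 : 0 ≤ sz := by positivity
  have husz : (1 - ‖z‖ ^ 2) * (sz * sz) = 1 := by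
    rw [hsz, ← mul_inv, Real.mul_self_sqrt (by linarith)]
    exact mul_inv_cancel₀ (by linarith)
  have hqzle : ‖isq (z * star z)‖ ≤ sz := (norm_isq_sq hz).1
  have hqz'le : ‖isq (star z * z)‖ ≤ sz := (norm_isq_sq hz).2
  set px := isq (x * star x) with hpx
  set qy := isq (y * star y) with hqy
  set px' := isq (star x * x) with hpx'
  set qy' := isq (star y * y) with hqy'
  set qz := isq (z * star z) with hqz
  set qz' := isq (star z * z) with hqz'
  clear_value px qy px' qy' qz qz'
  set Ax := px * (1 - x * star z) * qz with hAx
  set Ay := qy * (1 - y * star z) * qz with hAy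
  set Bx := qz' * (1 - star z * x) * px' with hBx
  set By := qz' * (1 - star z * y) * qy' with hBy
  clear_value Ax Ay Bx By
  have hsplit : Phi x z - Phi y z
      = ContinuousLinearMap.mulLeftRight ℂ (H →L[ℂ] H) (Ax - Ay) Bx
        + ContinuousLinearMap.mulLeftRight ℂ (H →L[ℂ] H) Ay (Bx - By) := by
    rw [phi_eq hx hz, phi_eq hy hz, ← hpx, ← hqy, ← hpx', ← hqy', ← hqz, ← hqz',
      ← hAx, ← hAy, ← hBx, ← hBy]
    ext1 w
    simp only [ContinuousLinearMap.sub_apply, ContinuousLinearMap.add_apply,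
      ContinuousLinearMap.mulLeftRight_apply]
    exact ring_iden'' Ax Ay Bx By w
  have hAd : ‖Ax - Ay‖ ≤ (2 * ‖px - qy‖ + ‖qy‖ * ‖x - y‖) * sz := by
    have hrew : Ax - Ay = ((px - qy) * (1 - x * star z) + qy * ((y - x) * star z)) * qz := by
      rw [hAx, hAy]; exact ring_iden px qy qz x y (star z)
    rw [hrew]
    refine (norm_mul_le _ _).trans ?_
    have h1 : ‖(px - qy) * (1 - x * star z) + qy * ((y - x) * star z)‖
        ≤ 2 * ‖px - qy‖ + ‖qy‖ * ‖x - y‖ := by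
      refine (norm_add_le _ _).trans ?_
      have e1 : ‖(px - qy) * (1 - x * star z)‖ ≤ ‖px - qy‖ * 2 :=
        (norm_mul_le _ _).trans (mul_le_mul_of_nonneg_left hb1 (norm_nonneg _))
      have e2 : ‖qy * ((y - x) * star z)‖ ≤ ‖qy‖ * ‖x - y‖ := by
        refine (norm_mul_le _ _).trans (mul_le_mul_of_nonneg_left ?_ (norm_nonneg _))
        refine (norm_mul_le _ _).trans ?_
        rw [norm_star, norm_sub_rev]
        nlinarith [norm_nonneg (x - y)]
      nlinarith
    exact mul_le_mul h1 hqzle (norm_nonneg _) (by positivity)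
  have hBxle : ‖Bx‖ ≤ sz * (2 * ‖px'‖) := by
    rw [hBx]
    refine norm_triple.trans ?_
    nlinarith [norm_nonneg qz', norm_nonneg px', norm_nonneg (1 - star z * x),
      mul_le_mul hqz'le hb3 (norm_nonneg _) hsz0]
  have hAyle : ‖Ay‖ ≤ (2 * ‖qy‖) * sz := by
    rw [hAy]
    refine norm_triple.trans ?_
    nlinarith [norm_nonneg qy, norm_nonneg qz, norm_nonneg (1 - y * star z),
      mul_le_mul (mul_le_mul_of_nonneg_left hb2 (norm_nonneg qy)) hqzle
        (norm_nonneg _) (by positivity : (0:ℝ) ≤ ‖qy‖ * 2)]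
  have hBd : ‖Bx - By‖ ≤ sz * (2 * ‖px' - qy'‖ + ‖x - y‖ * ‖qy'‖) := by
    have hrew : Bx - By = qz' * ((1 - star z * x) * (px' - qy') + star z * (y - x) * qy') := by
      rw [hBx, hBy]; exact ring_iden' px' qy' qz' (star z) x y
    rw [hrew]
    refine (norm_mul_le _ _).trans ?_
    have h1 : ‖(1 - star z * x) * (px' - qy') + star z * (y - x) * qy'‖
        ≤ 2 * ‖px' - qy'‖ + ‖x - y‖ * ‖qy'‖ := by
      refine (norm_add_le _ _).trans ?_
      have e1 : ‖(1 - star z * x) * (px' - qy')‖ ≤ 2 * ‖px' - qy'‖ :=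
        (norm_mul_le _ _).trans (mul_le_mul_of_nonneg_right hb3 (norm_nonneg _))
      have e2 : ‖star z * (y - x) * qy'‖ ≤ ‖x - y‖ * ‖qy'‖ := by
        refine (norm_mul_le _ _).trans (mul_le_mul_of_nonneg_right ?_ (norm_nonneg _))
        refine (norm_mul_le _ _).trans ?_
        rw [norm_star, norm_sub_rev]
        nlinarith [norm_nonneg (x - y)]
      nlinarith
    exact mul_le_mul hqz'le h1 (norm_nonneg _) hsz0
  have hstep : ‖Phi x z - Phi y z‖ ≤ ‖Ax - Ay‖ * ‖Bx‖ + ‖Ay‖ * ‖Bx - By‖ := by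
    rw [hsplit]
    refine (norm_add_le _ _).trans (add_le_add ?_ ?_) <;>
      exact ContinuousLinearMap.opNorm_mulLeftRight_apply_apply_le ℂ _ _ _
  set u1 := 2 * ‖px - qy‖ + ‖qy‖ * ‖x - y‖ with hu1
  set u2 := 2 * ‖px'‖ with hu2
  set u3 := 2 * ‖qy‖ with hu3
  set u4 := 2 * ‖px' - qy'‖ + ‖x - y‖ * ‖qy'‖ with hu4
  have hu10 : 0 ≤ u1 := by positivity
  have hu20 : 0 ≤ u2 := by positivity
  have hu30 : 0 ≤ u3 := by positivity
  have hu40 : 0 ≤ u4 := by positivity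
  have hfin : ‖Phi x z - Phi y z‖ ≤ (u1 * sz) * (sz * u2) + (u3 * sz) * (sz * u4) :=
    hstep.trans (add_le_add (mul_le_mul hAd hBxle (norm_nonneg _) (by positivity))
      (mul_le_mul hAyle hBd (norm_nonneg _) (by positivity)))
  calc (1 - ‖z‖ ^ 2) * ‖Phi x z - Phi y z‖
      ≤ (1 - ‖z‖ ^ 2) * ((u1 * sz) * (sz * u2) + (u3 * sz) * (sz * u4)) :=
        mul_le_mul_of_nonneg_left hfin (by linarith)
    _ = ((1 - ‖z‖ ^ 2) * (sz * sz)) * (u1 * u2) + ((1 - ‖z‖ ^ 2) * (sz * sz)) * (u3 * u4) := by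
        ring
    _ = u1 * u2 + u3 * u4 := by rw [husz, one_mul, one_mul]

lemma del_self {x : H →L[ℂ] H} : Del x x = 0 := by
  simp [Del]

lemma continuousOn_px :
    ContinuousOn (fun x : H →L[ℂ] H => isq (x * star x)) {x : H →L[ℂ] H | ‖x‖ < 1} := by
  refine continuousOn_isq.comp (continuous_id.mul continuous_star).continuousOn ?_
  intro x hx
  have hx1 : ‖x‖ < 1 := hx
  refine ⟨mul_star_self_nonneg x, ?_⟩
  show ‖x * star x‖ < 1
  rw [norm_mul_star_self]
  nlinarith [norm_nonneg x]

lemma continuousOn_px' :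
    ContinuousOn (fun x : H →L[ℂ] H => isq (star x * x)) {x : H →L[ℂ] H | ‖x‖ < 1} := by
  refine continuousOn_isq.comp (continuous_star.mul continuous_id).continuousOn ?_
  intro x hx
  have hx1 : ‖x‖ < 1 := hx
  refine ⟨star_mul_self_nonneg x, ?_⟩
  show ‖star x * x‖ < 1
  rw [norm_star_mul_self']
  nlinarith [norm_nonneg x]


end Aux

/-- Lemma 2.1 of the paper, for `B(H)`: (a) for each `x` in the open unit ball the sequence
`(1 − ‖z_k‖²)‖Φ(x, z_k)‖` is bounded by `(1 + ‖x‖)/(1 − ‖x‖)`, so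
`F(x) = limsup_k (1 − ‖z_k‖²)‖Φ(x, z_k)‖` is a well-defined real number, and
(b) `F` is continuous on the open unit ball of `B(H)`. -/
theorem stmt13 {H : Type*} [NormedAddCommGroup H] [InnerProductSpace ℂ H] [CompleteSpace H]
    (z : ℕ → H →L[ℂ] H) (hz : ∀ k, ‖z k‖ < 1)
    (ξ : H →L[ℂ] H) (hξ : ‖ξ‖ ≤ 1) (hconv : Tendsto z atTop (nhds ξ)) :
    (∀ x : H →L[ℂ] H, ‖x‖ < 1 → ∀ k,
        (1 - ‖z k‖ ^ 2) * ‖Phi x (z k)‖ ≤ (1 + ‖x‖) / (1 - ‖x‖))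
    ∧ ContinuousOn (fun x : H →L[ℂ] H =>
        limsup (fun k => (1 - ‖z k‖ ^ 2) * ‖Phi x (z k)‖) atTop)
        {x : H →L[ℂ] H | ‖x‖ < 1} := by
  rcases subsingleton_or_nontrivial H with hH | hH
  · have hsub : Subsingleton (H →L[ℂ] H) := ⟨fun f g => by ext v; exact Subsingleton.elim _ _⟩
    have hsub2 : Subsingleton ((H →L[ℂ] H) →L[ℂ] (H →L[ℂ] H)) :=
      ⟨fun f g => by ext v; exact Subsingleton.elim _ _⟩
    have hPhi0 : ∀ x w : H →L[ℂ] H, Phi x w = 0 := fun x w => Subsingleton.elim _ _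
    constructor
    · intro x hx k
      rw [hPhi0 x (z k), norm_zero, mul_zero]
      have h0 : (0:ℝ) < 1 - ‖x‖ := by linarith
      positivity
    · refine continuousOn_const (c := (0:ℝ)).congr fun x hx => ?_
      have : (fun k => (1 - ‖z k‖ ^ 2) * ‖Phi x (z k)‖) = fun _ => (0:ℝ) :=
        funext fun k => by rw [hPhi0 x (z k), norm_zero, mul_zero]
      rw [this, limsup_const]
  · set s := {x : H →L[ℂ] H | ‖x‖ < 1} with hs
    set g := fun (x : H →L[ℂ] H) (k : ℕ) => (1 - ‖z k‖ ^ 2) * ‖Phi x (z k)‖ with hg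
    have hg0 : ∀ x k, 0 ≤ g x k := by
      intro x k
      have := hz k
      have := norm_nonneg (z k)
      have : (0:ℝ) ≤ 1 - ‖z k‖ ^ 2 := by nlinarith
      positivity
    have ha : ∀ x : H →L[ℂ] H, ‖x‖ < 1 → ∀ k, g x k ≤ (1 + ‖x‖) / (1 - ‖x‖) :=
      fun x hx k => bound_a hx (hz k)
    have hbd : ∀ x : H →L[ℂ] H, ‖x‖ < 1 → IsBoundedUnder (· ≤ ·) atTop (g x) :=
      fun x hx => isBoundedUnder_of ⟨(1 + ‖x‖) / (1 - ‖x‖), ha x hx⟩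
    have hcb : ∀ x : H →L[ℂ] H, IsCoboundedUnder (· ≤ ·) atTop (g x) :=
      fun x => isCoboundedUnder_le_of_le atTop (hg0 x)
    refine ⟨ha, ?_⟩
    set F := fun x : H →L[ℂ] H => limsup (g x) atTop with hF
    have key : ∀ x ∈ s, ∀ y ∈ s, F x ≤ F y + Del x y := by
      intro x hx y hy
      have hxs : ‖x‖ < 1 := hx
      have hys : ‖y‖ < 1 := hy
      have hle : ∀ k, g x k ≤ g y k + Del x y := by
        intro k
        simp only [hg]
        have hd := bound_diff hxs hys (hz k)
        have h2 : ‖z k‖ ^ 2 < 1 := by nlinarith [hz k, norm_nonneg (z k)]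
        have hc0 : (0:ℝ) ≤ 1 - ‖z k‖ ^ 2 := by linarith
        have htr : ‖Phi x (z k)‖ - ‖Phi y (z k)‖ ≤ ‖Phi x (z k) - Phi y (z k)‖ :=
          norm_sub_norm_le _ _
        have hmul : (1 - ‖z k‖ ^ 2) * ‖Phi x (z k)‖
            ≤ (1 - ‖z k‖ ^ 2) * ‖Phi y (z k)‖ + (1 - ‖z k‖ ^ 2) * ‖Phi x (z k) - Phi y (z k)‖ := by
          nlinarith
        exact hmul.trans (by linarith)
      calc F x ≤ limsup (fun k => g y k + Del x y) atTop :=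
            limsup_le_limsup (Eventually.of_forall hle) (hcb x)
              (isBoundedUnder_of ⟨(1 + ‖y‖) / (1 - ‖y‖) + Del x y,
                fun k => by have := ha y hys k; linarith⟩)
        _ = F y + Del x y := limsup_add_const atTop (g y) (Del x y) (hbd y hys) (hcb y)
    intro x₀ hx₀
    have hx₀s : ‖x₀‖ < 1 := hx₀
    have hD1 : ContinuousOn (fun x => Del x x₀) s := by
      unfold Del
      refine ContinuousOn.add (ContinuousOn.mul ?_ ?_) (ContinuousOn.mul ?_ ?_)
      · exact (continuousOn_const.mul ((continuousOn_px.sub continuousOn_const).norm)).add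
          (continuousOn_const.mul ((continuousOn_id.sub continuousOn_const).norm))
      · exact continuousOn_const.mul continuousOn_px'.norm
      · exact continuousOn_const
      · exact (continuousOn_const.mul ((continuousOn_px'.sub continuousOn_const).norm)).add
          (((continuousOn_id.sub continuousOn_const).norm).mul continuousOn_const)
    have hD2 : ContinuousOn (fun x => Del x₀ x) s := by
      unfold Del
      refine ContinuousOn.add (ContinuousOn.mul ?_ ?_) (ContinuousOn.mul ?_ ?_)
      · exact (continuousOn_const.mul ((continuousOn_const.sub continuousOn_px).norm)).add
          (continuousOn_px.norm.mul ((continuousOn_const.sub continuousOn_id).norm))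
      · exact continuousOn_const
      · exact continuousOn_const.mul continuousOn_px.norm
      · exact (continuousOn_const.mul ((continuousOn_const.sub continuousOn_px').norm)).add
          (((continuousOn_const.sub continuousOn_id).norm).mul continuousOn_px'.norm)
    have ht1 : Tendsto (fun x => F x₀ + Del x x₀) (nhdsWithin x₀ s) (nhds (F x₀)) := by
      have := (hD1.continuousWithinAt hx₀)
      have h0 : Del x₀ x₀ = 0 := del_self
      have : Tendsto (fun x => Del x x₀) (nhdsWithin x₀ s) (nhds 0) := by
        simpa [ContinuousWithinAt, h0] using hD1.continuousWithinAt hx₀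
      simpa using tendsto_const_nhds.add this
    have ht2 : Tendsto (fun x => F x₀ - Del x₀ x) (nhdsWithin x₀ s) (nhds (F x₀)) := by
      have : Tendsto (fun x => Del x₀ x) (nhdsWithin x₀ s) (nhds 0) := by
        simpa [ContinuousWithinAt, del_self] using hD2.continuousWithinAt hx₀
      simpa using tendsto_const_nhds.sub this
    refine tendsto_of_tendsto_of_tendsto_of_le_of_le' ht2 ht1 ?_ ?_
    · filter_upwards [self_mem_nhdsWithin] with x hxs
      have := key x₀ hx₀ x hxs
      linarith
    · filter_upwards [self_mem_nhdsWithin] with x hxs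
      exact key x hxs x₀ hx₀
end

section
/- Let H be a complex Hilbert space and B(H) = L(H,H) the bounded linear operators on H. Let (z_k) be a sequence in B(H) with ‖z_k‖ < 1 for all k, converging in norm to ξ ∈ B(H) with ‖ξ‖ ≤ 1. For ‖x‖ < 1 and ‖z‖ < 1 in B(H), let Φ(x,z) denote the bounded linear map on B(H) given by w ↦ (1 − x x*)^{-1/2} (1 − x z*) (1 − z z*)^{-1/2} · w · (1 − z* z)^{-1/2} (1 − z* x) (1 − x* x)^{-1/2}. If (x_k) is a sequence in the open unit ball of B(H) converging in norm to x with ‖x‖ < 1, then limsup_{k→∞} (1 − ‖z_k‖²) ‖Φ(x_k, z_k)‖ = limsup_{k→∞} (1 − ‖z_k‖²) ‖Φ(x, z_k)‖. -/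
/-!
Write `Φ(x, z) = L_a R_b` with `a = (1 - xx*)^{-1/2}(1 - xz*) · (1 - zz*)^{-1/2}` and
`b = (1 - z*z)^{-1/2} · (1 - z*x)(1 - x*x)^{-1/2}`. Both outer factors have norm at most
`(1 - ‖z‖²)^{-1/2}`, so the weight `1 - ‖z‖²` absorbs them; what is left depends on `z` only
through `z*`, of norm at most one, and depends continuously on `x` at `x'`, uniformly in `z`.
Hence `(1 - ‖z_k‖²)‖Φ(x_k, z_k) - Φ(x', z_k)‖ → 0` while `(1 - ‖z_k‖²)‖Φ(x', z_k)‖` stays bounded,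
and the two limsups agree.
-/

open Filter ContinuousLinearMap

open scoped Topology Ring

lemma limsup_eq_of_tendsto_sub_zero {ι : Type*} {l : Filter ι} [l.NeBot] {f g : ι → ℝ}
    (hg_le : IsBoundedUnder (· ≤ ·) l g) (hg_ge : IsBoundedUnder (· ≥ ·) l g)
    (h : Tendsto (f - g) l (𝓝 0)) : limsup f l = limsup g l := by
  have hf : f = g + (f - g) := by abel
  have hv_le : IsBoundedUnder (· ≤ ·) l (f - g) := h.isBoundedUnder_le
  have hv_ge : IsBoundedUnder (· ≥ ·) l (f - g) := h.isBoundedUnder_ge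
  refine le_antisymm ?_ ?_
  · calc limsup f l = limsup (g + (f - g)) l := by rw [← hf]
      _ ≤ limsup g l + limsup (f - g) l :=
          limsup_add_le hg_ge hg_le hv_ge.isCoboundedUnder_flip hv_le
      _ = limsup g l := by rw [h.limsup_eq, add_zero]
  · calc limsup g l = limsup g l + liminf (f - g) l := by rw [h.liminf_eq, add_zero]
      _ ≤ limsup (g + (f - g)) l :=
          le_limsup_add hg_le hg_ge.isCoboundedUnder_flip hv_le hv_ge
      _ = limsup f l := by rw [← hf]

lemma norm_inverse_one_sub_le {R : Type*} [NormedRing R] [NormOneClass R] [HasSummableGeomSeries R]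
    {t : R} (ht : ‖t‖ < 1) : ‖(1 - t)⁻¹ʳ‖ ≤ (1 - ‖t‖)⁻¹ := by
  have := tsum_geometric_le_of_norm_lt_one t ht
  rw [norm_one, sub_self, zero_add] at this
  rwa [NormedRing.inverse_one_sub t ht]

lemma norm_sub_mul_le_of_norm_le_one {R : Type*} [NonUnitalSeminormedRing R] (a b : R) {w : R}
    (hw : ‖w‖ ≤ 1) : ‖a - b * w‖ ≤ ‖a‖ + ‖b‖ :=
  (norm_sub_le _ _).trans (add_le_add le_rfl ((norm_mul_le _ _).trans
    (mul_le_of_le_one_right (norm_nonneg _) hw)))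

lemma norm_sub_mul_le_of_norm_le_one' {R : Type*} [NonUnitalSeminormedRing R] (a b : R) {w : R}
    (hw : ‖w‖ ≤ 1) : ‖a - w * b‖ ≤ ‖a‖ + ‖b‖ :=
  (norm_sub_le _ _).trans (add_le_add le_rfl ((norm_mul_le _ _).trans
    (mul_le_of_le_one_left (norm_nonneg _) hw)))

section MulLeftRight

variable {𝕜 R : Type*} [NontriviallyNormedField 𝕜] [NonUnitalSeminormedRing R]
  [NormedSpace 𝕜 R] [IsScalarTower 𝕜 R R] [SMulCommClass 𝕜 R R]

lemma norm_mulLeftRight_sub_le (a b a' b' : R) :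
    ‖mulLeftRight 𝕜 R a b - mulLeftRight 𝕜 R a' b'‖ ≤ ‖a - a'‖ * ‖b‖ + ‖a'‖ * ‖b - b'‖ := by
  have hsplit : mulLeftRight 𝕜 R a b - mulLeftRight 𝕜 R a' b'
      = mulLeftRight 𝕜 R (a - a') b + mulLeftRight 𝕜 R a' (b - b') := by
    simp only [map_sub, sub_apply]
    abel
  rw [hsplit]
  exact (norm_add_le _ _).trans (add_le_add (opNorm_mulLeftRight_apply_apply_le _ _ _ _)
    (opNorm_mulLeftRight_apply_apply_le _ _ _ _))

lemma norm_mulLeftRight_mul_mul_le (l q q' r : R) :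
    ‖mulLeftRight 𝕜 R (l * q) (q' * r)‖ ≤ ‖q‖ * ‖q'‖ * (‖l‖ * ‖r‖) :=
  calc ‖mulLeftRight 𝕜 R (l * q) (q' * r)‖ ≤ ‖l * q‖ * ‖q' * r‖ :=
        opNorm_mulLeftRight_apply_apply_le _ _ _ _
    _ ≤ (‖l‖ * ‖q‖) * (‖q'‖ * ‖r‖) := by gcongr <;> exact norm_mul_le _ _
    _ = ‖q‖ * ‖q'‖ * (‖l‖ * ‖r‖) := by ring

lemma norm_mulLeftRight_mul_mul_sub_le (l l' q q' r r' : R) :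
    ‖mulLeftRight 𝕜 R (l * q) (q' * r) - mulLeftRight 𝕜 R (l' * q) (q' * r')‖
      ≤ ‖q‖ * ‖q'‖ * (‖l - l'‖ * ‖r‖ + ‖l'‖ * ‖r - r'‖) :=
  calc _ ≤ ‖l * q - l' * q‖ * ‖q' * r‖ + ‖l' * q‖ * ‖q' * r - q' * r'‖ :=
        norm_mulLeftRight_sub_le _ _ _ _
    _ ≤ (‖l - l'‖ * ‖q‖) * (‖q'‖ * ‖r‖) + (‖l'‖ * ‖q‖) * (‖q'‖ * ‖r - r'‖) := by
        rw [← sub_mul, ← mul_sub]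
        gcongr <;> exact norm_mul_le _ _
    _ = ‖q‖ * ‖q'‖ * (‖l - l'‖ * ‖r‖ + ‖l'‖ * ‖r - r'‖) := by ring

end MulLeftRight

section CStarAlgebra

variable {A : Type*} [CStarAlgebra A]

lemma norm_mul_star_lt_one {z : A} (hz : ‖z‖ < 1) : ‖z * star z‖ < 1 := by
  rw [CStarRing.norm_self_mul_star]
  nlinarith [norm_nonneg z]

lemma isUnit_one_sub_mul_star {z : A} (hz : ‖z‖ < 1) : IsUnit (1 - z * star z) :=
  (Units.oneSub _ (norm_mul_star_lt_one hz)).isUnit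

variable [PartialOrder A] [StarOrderedRing A]

lemma one_sub_mul_star_nonneg {z : A} (hz : ‖z‖ ≤ 1) : 0 ≤ 1 - z * star z := by
  rw [sub_nonneg, ← CStarAlgebra.norm_le_one_iff_of_nonneg _ (mul_star_self_nonneg z),
    CStarRing.norm_self_mul_star]
  nlinarith [norm_nonneg z]

/-- `(1 - x x*)^{-1/2}`; `(1 - x* x)^{-1/2}` is `invSqrtDefect (star x)`. -/
noncomputable def invSqrtDefect (x : A) : A := (CFC.sqrt (1 - x * star x))⁻¹ʳ

lemma norm_invSqrtDefect_le [Nontrivial A] {z : A} (hz : ‖z‖ < 1) :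
    ‖invSqrtDefect z‖ ≤ (√(1 - ‖z‖ ^ 2))⁻¹ := by
  have hnonneg : 0 ≤ (1 - z * star z)⁻¹ʳ :=
    (CFC.ringInverse_nonneg_iff_nonneg_of_isUnit (isUnit_one_sub_mul_star hz)).2
      (one_sub_mul_star_nonneg hz.le)
  rw [invSqrtDefect, ← CFC.sqrt_ringInverse, CFC.norm_sqrt _ hnonneg, ← Real.sqrt_inv]
  refine Real.sqrt_le_sqrt ((norm_inverse_one_sub_le (norm_mul_star_lt_one hz)).trans_eq ?_)
  rw [CStarRing.norm_self_mul_star, sq]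

lemma norm_invSqrtDefect_mul_norm_invSqrtDefect_star_mul_le [Nontrivial A] {z : A}
    (hz : ‖z‖ < 1) : ‖invSqrtDefect z‖ * ‖invSqrtDefect (star z)‖ * (1 - ‖z‖ ^ 2) ≤ 1 := by
  have hc : 0 ≤ 1 - ‖z‖ ^ 2 := by nlinarith [norm_nonneg z]
  have hstar := norm_invSqrtDefect_le (z := star z) (by rwa [norm_star])
  rw [norm_star] at hstar
  calc _ ≤ (√(1 - ‖z‖ ^ 2))⁻¹ * (√(1 - ‖z‖ ^ 2))⁻¹ * (1 - ‖z‖ ^ 2) := by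
        gcongr
        exact norm_invSqrtDefect_le hz
    _ ≤ 1 := by
        rw [← mul_inv, Real.mul_self_sqrt hc]
        exact inv_mul_le_one_of_le₀ le_rfl hc

lemma continuousAt_invSqrtDefect {x : A} (hx : ‖x‖ < 1) : ContinuousAt invSqrtDefect x := by
  have hunit : IsUnit (CFC.sqrt (1 - x * star x)) :=
    (CFC.isUnit_sqrt_iff _ (one_sub_mul_star_nonneg hx.le)).2 (isUnit_one_sub_mul_star hx)
  have hdefect : Tendsto (fun y : A => 1 - y * star y) (𝓝 x) (𝓝[{a | 0 ≤ a}] (1 - x * star x)) :=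
    tendsto_nhdsWithin_iff.2 ⟨(by fun_prop : Continuous fun y : A => 1 - y * star y).tendsto x,
      Filter.mem_of_superset (Metric.isOpen_ball.mem_nhds (mem_ball_zero_iff.2 hx))
        fun y hy => one_sub_mul_star_nonneg (mem_ball_zero_iff.1 hy).le⟩
  exact (NormedRing.inverse_continuousAt hunit.unit).tendsto.comp
    ((CFC.continuousOn_sqrt _ (one_sub_mul_star_nonneg hx.le)).tendsto.comp hdefect)

noncomputable def leftFactor (x z : A) : A := invSqrtDefect x * (1 - x * star z)

noncomputable def rightFactor (x z : A) : A := (1 - star z * x) * invSqrtDefect (star x)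

section Factors

variable {z : A} (hz : ‖z‖ ≤ 1) (x y : A)
include hz

lemma norm_leftFactor_le : ‖leftFactor x z‖ ≤ ‖invSqrtDefect x‖ + ‖invSqrtDefect x * x‖ := by
  rw [leftFactor, mul_sub, mul_one, ← mul_assoc]
  exact norm_sub_mul_le_of_norm_le_one _ _ (by rwa [norm_star])

lemma norm_rightFactor_le :
    ‖rightFactor x z‖ ≤ ‖invSqrtDefect (star x)‖ + ‖x * invSqrtDefect (star x)‖ := by
  rw [rightFactor, sub_mul, one_mul, mul_assoc]
  exact norm_sub_mul_le_of_norm_le_one' _ _ (by rwa [norm_star])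

lemma norm_leftFactor_sub_le :
    ‖leftFactor x z - leftFactor y z‖
      ≤ ‖invSqrtDefect x - invSqrtDefect y‖ + ‖invSqrtDefect x * x - invSqrtDefect y * y‖ := by
  have hL : leftFactor x z - leftFactor y z = (invSqrtDefect x - invSqrtDefect y)
      - (invSqrtDefect x * x - invSqrtDefect y * y) * star z := by
    simp only [leftFactor]
    noncomm_ring
  rw [hL]
  exact norm_sub_mul_le_of_norm_le_one _ _ (by rwa [norm_star])

lemma norm_rightFactor_sub_le :
    ‖rightFactor x z - rightFactor y z‖
      ≤ ‖invSqrtDefect (star x) - invSqrtDefect (star y)‖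
        + ‖x * invSqrtDefect (star x) - y * invSqrtDefect (star y)‖ := by
  have hR : rightFactor x z - rightFactor y z = (invSqrtDefect (star x) - invSqrtDefect (star y))
      - star z * (x * invSqrtDefect (star x) - y * invSqrtDefect (star y)) := by
    simp only [rightFactor]
    noncomm_ring
  rw [hR]
  exact norm_sub_mul_le_of_norm_le_one' _ _ (by rwa [norm_star])

end Factors

end CStarAlgebra

section Phi

variable {H : Type*} [NormedAddCommGroup H] [InnerProductSpace ℂ H] [CompleteSpace H]

lemma Phi_eq_mulLeftRight (x z : H →L[ℂ] H) :
    Phi x z = mulLeftRight ℂ (H →L[ℂ] H) (leftFactor x z * invSqrtDefect z)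
      (invSqrtDefect (star z) * rightFactor x z) := by
  simp only [Phi, leftFactor, rightFactor, invSqrtDefect, star_star, mul_assoc]

variable [Nontrivial H]

section WeightedBounds

variable {z : H →L[ℂ] H} (hz : ‖z‖ < 1) (x y : H →L[ℂ] H)
include hz

lemma one_sub_norm_sq_mul_norm_Phi_le :
    (1 - ‖z‖ ^ 2) * ‖Phi x z‖ ≤ ‖leftFactor x z‖ * ‖rightFactor x z‖ :=
  calc _ ≤ (1 - ‖z‖ ^ 2) * (‖invSqrtDefect z‖ * ‖invSqrtDefect (star z)‖
          * (‖leftFactor x z‖ * ‖rightFactor x z‖)) := by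
        rw [Phi_eq_mulLeftRight]
        gcongr
        · nlinarith [norm_nonneg z]
        · exact norm_mulLeftRight_mul_mul_le _ _ _ _
    _ ≤ _ := by
        rw [← mul_assoc, mul_comm (1 - ‖z‖ ^ 2)]
        exact mul_le_of_le_one_left (by positivity)
          (norm_invSqrtDefect_mul_norm_invSqrtDefect_star_mul_le hz)

lemma one_sub_norm_sq_mul_norm_Phi_sub_le :
    (1 - ‖z‖ ^ 2) * ‖Phi x z - Phi y z‖
      ≤ ‖leftFactor x z - leftFactor y z‖ * ‖rightFactor x z‖
        + ‖leftFactor y z‖ * ‖rightFactor x z - rightFactor y z‖ :=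
  calc _ ≤ (1 - ‖z‖ ^ 2) * (‖invSqrtDefect z‖ * ‖invSqrtDefect (star z)‖
          * (‖leftFactor x z - leftFactor y z‖ * ‖rightFactor x z‖
            + ‖leftFactor y z‖ * ‖rightFactor x z - rightFactor y z‖)) := by
        rw [Phi_eq_mulLeftRight, Phi_eq_mulLeftRight]
        gcongr
        · nlinarith [norm_nonneg z]
        · exact norm_mulLeftRight_mul_mul_sub_le _ _ _ _ _ _
    _ ≤ _ := by
        rw [← mul_assoc, mul_comm (1 - ‖z‖ ^ 2)]
        exact mul_le_of_le_one_left (by positivity)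
          (norm_invSqrtDefect_mul_norm_invSqrtDefect_star_mul_le hz)

end WeightedBounds

lemma tendsto_one_sub_norm_sq_mul_norm_Phi_sub {ι : Type*} {l : Filter ι}
    {z x : ι → H →L[ℂ] H} {x' : H →L[ℂ] H} (hz : ∀ i, ‖z i‖ < 1) (hx' : ‖x'‖ < 1)
    (hx : Tendsto x l (𝓝 x')) :
    Tendsto (fun i => (1 - ‖z i‖ ^ 2) * ‖Phi (x i) (z i) - Phi x' (z i)‖) l (𝓝 0) := by
  set D := invSqrtDefect (A := H →L[ℂ] H)
  have hD : ContinuousAt D x' := continuousAt_invSqrtDefect hx'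
  have hD_star : ContinuousAt D (star x') := continuousAt_invSqrtDefect (by rwa [norm_star])
  have hcont : ContinuousAt (fun y =>
      (‖D y - D x'‖ + ‖D y * y - D x' * x'‖) * (‖D (star y)‖ + ‖y * D (star y)‖)
        + (‖D x'‖ + ‖D x' * x'‖)
          * (‖D (star y) - D (star x')‖ + ‖y * D (star y) - x' * D (star x')‖)) x' := by
    fun_prop
  have hbound := hcont.tendsto.comp hx
  simp only [sub_self, norm_zero, zero_mul, mul_zero, add_zero] at hbound
  refine squeeze_zero (fun i => ?_) (fun i => ?_) hbound
  · have : 0 ≤ 1 - ‖z i‖ ^ 2 := by nlinarith [hz i, norm_nonneg (z i)]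
    positivity
  · refine (one_sub_norm_sq_mul_norm_Phi_sub_le (hz i) _ _).trans ?_
    dsimp only [Function.comp_apply]
    gcongr
    · exact norm_leftFactor_sub_le (hz i).le _ _
    · exact norm_rightFactor_le (hz i).le _
    · exact norm_leftFactor_le (hz i).le _
    · exact norm_rightFactor_sub_le (hz i).le _ _

end Phi

theorem stmt14_general {H : Type*} [NormedAddCommGroup H] [InnerProductSpace ℂ H] [CompleteSpace H]
    (z : ℕ → H →L[ℂ] H) (hz : ∀ k, ‖z k‖ < 1)
    (x : ℕ → H →L[ℂ] H)
    (x' : H →L[ℂ] H) (hx' : ‖x'‖ < 1) (hxconv : Tendsto x atTop (nhds x')) :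
    limsup (fun k => (1 - ‖z k‖ ^ 2) * ‖Phi (x k) (z k)‖) atTop
      = limsup (fun k => (1 - ‖z k‖ ^ 2) * ‖Phi x' (z k)‖) atTop := by
  cases subsingleton_or_nontrivial H
  · have hPhi : ∀ k, Phi (x k) (z k) = Phi x' (z k) := fun k => Subsingleton.elim _ _
    simp only [hPhi]
  have hweight : ∀ k, 0 ≤ 1 - ‖z k‖ ^ 2 := fun k => by nlinarith [hz k, norm_nonneg (z k)]
  refine limsup_eq_of_tendsto_sub_zero
    (isBoundedUnder_of ⟨_, fun k => (one_sub_norm_sq_mul_norm_Phi_le (hz k) x').trans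
      (mul_le_mul (norm_leftFactor_le (hz k).le x') (norm_rightFactor_le (hz k).le x')
        (norm_nonneg _) (by positivity))⟩)
    (isBoundedUnder_of ⟨0, fun k => mul_nonneg (hweight k) (norm_nonneg _)⟩)
    (squeeze_zero_norm (fun k => ?_) (tendsto_one_sub_norm_sq_mul_norm_Phi_sub hz hx' hxconv))
  rw [Pi.sub_apply, ← mul_sub, norm_mul, Real.norm_of_nonneg (hweight k)]
  exact mul_le_mul_of_nonneg_left (abs_norm_sub_norm_le _ _) (hweight k)

/-- Lemma 2.2 of the paper, for `B(H)`: if `(x_k)` is a sequence in the open unit ball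
norm-converging to `x` with `‖x‖ < 1`, then
`limsup_k (1 − ‖z_k‖²)‖Φ(x_k, z_k)‖ = limsup_k (1 − ‖z_k‖²)‖Φ(x, z_k)‖`. -/
theorem stmt14 {H : Type*} [NormedAddCommGroup H] [InnerProductSpace ℂ H] [CompleteSpace H]
    (z : ℕ → H →L[ℂ] H) (hz : ∀ k, ‖z k‖ < 1)
    (ξ : H →L[ℂ] H) (hξ : ‖ξ‖ ≤ 1) (hconv : Tendsto z atTop (nhds ξ))
    (x : ℕ → H →L[ℂ] H) (hx : ∀ k, ‖x k‖ < 1)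
    (x' : H →L[ℂ] H) (hx' : ‖x'‖ < 1) (hxconv : Tendsto x atTop (nhds x')) :
    limsup (fun k => (1 - ‖z k‖ ^ 2) * ‖Phi (x k) (z k)‖) atTop
      = limsup (fun k => (1 - ‖z k‖ ^ 2) * ‖Phi x' (z k)‖) atTop :=
  stmt14_general z hz x x' hx' hxconv
end

section
/- Let A be a unital C*-algebra and let e₁, …, e_p ∈ A be partial isometries (e_j e_j* e_j = e_j for each j) satisfying e_i e_j* = 0 and e_i* e_j = 0 for all i ≠ j. Let α₁, …, α_p ∈ [0,1) and β₁, …, β_p ∈ ℂ with |β_j| < 1 for each j, and set a = Σ_{j=1}^{p} α_j e_j, x = Σ_{j=1}^{p} β_j e_j, and w = Σ_{j=1}^{p} (β_j/(1 + α_j β_j)) e_j (note 1 + α_j β_j ≠ 0 since |α_j β_j| < 1). Then: (i) w + (x a* w + w a* x)/2 = x, i.e., ( id + x □ a )(w) = x; and (ii) a + (1 − a a*)^{1/2} w (1 − a* a)^{1/2} = Σ_{j=1}^{p} ((α_j + β_j)/(1 + α_j β_j)) e_j. Consequently the Möbius transformation g_a of the open unit ball of A satisfies g_a(x) = Σ_{j=1}^{p}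 𝔤_{α_j}(β_j) e_j, where 𝔤_α(β) = (β + α)/(1 + αβ) is the Möbius transformation of the unit disc. -/
/-!
On elements of the form `∑ c_j • e_j` all products are computed coordinatewise: by the
orthogonality relations `(∑ c_j • e_j) (∑ d_j • e_j)* (∑ f_j • e_j) = ∑ (c_j d̄_j f_j) • e_j`.
Moreover `a a* = ∑ α_j² • e_j e_j*` and `a* a = ∑ α_j² • e_j* e_j` are combinations of mutually
orthogonal projections, so their functional calculus is coordinatewise as well:
`(1 - a a*)^{1/2} = 1 - ∑ (1 - √(1 - α_j²)) • e_j e_j*`. Both identities thereby reduce, in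
each coordinate, to the scalar identities behind the Möbius map `β ↦ (α + β)/(1 + αβ)` of the disc.
-/

open Finset

theorem one_add_mul_ne_zero_of_norm_le_one_of_norm_lt_one {𝕜 : Type*} [NormedDivisionRing 𝕜]
    {z w : 𝕜} (hz : ‖z‖ ≤ 1) (hw : ‖w‖ < 1) : 1 + z * w ≠ 0 := fun h => by
  have : ‖z * w‖ < 1 := by
    rw [norm_mul]
    nlinarith [norm_nonneg z, norm_nonneg w]
  simp [eq_neg_of_add_eq_zero_right h] at this

section

variable {ι R A : Type*}

structure IsOrthogonalPartialIsometries [Semiring A] [StarRing A] (e : ι → A) : Prop where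
  mul_star_mul_self : ∀ j, e j * star (e j) * e j = e j
  mul_star_eq_zero : ∀ i j, i ≠ j → e i * star (e j) = 0
  star_mul_eq_zero : ∀ i j, i ≠ j → star (e i) * e j = 0

namespace IsOrthogonalPartialIsometries

variable [Ring A] [StarRing A] {e : ι → A}

theorem isStarProjection_mul_star (he : IsOrthogonalPartialIsometries e) (j : ι) :
    IsStarProjection (e j * star (e j)) where
  isIdempotentElem := by rw [IsIdempotentElem, ← mul_assoc, he.mul_star_mul_self]
  isSelfAdjoint := .mul_star_self _

theorem isStarProjection_star_mul (he : IsOrthogonalPartialIsometries e) (j : ι) :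
    IsStarProjection (star (e j) * e j) where
  isIdempotentElem := by rw [IsIdempotentElem, mul_assoc, ← mul_assoc (e j), he.mul_star_mul_self]
  isSelfAdjoint := .star_mul_self _

theorem mul_star_mul_mul_star_eq_zero (he : IsOrthogonalPartialIsometries e) {i j : ι}
    (hij : i ≠ j) : e i * star (e i) * (e j * star (e j)) = 0 := by
  rw [mul_assoc, ← mul_assoc (star (e i)), he.star_mul_eq_zero i j hij, zero_mul, mul_zero]

theorem star_mul_mul_star_mul_eq_zero (he : IsOrthogonalPartialIsometries e) {i j : ι}
    (hij : i ≠ j) : star (e i) * e i * (star (e j) * e j) = 0 := by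
  rw [mul_assoc, ← mul_assoc (e i), he.mul_star_eq_zero i j hij, zero_mul, mul_zero]

end IsOrthogonalPartialIsometries

section FiniteSums

variable [Fintype ι]

theorem sum_smul_mul_sum_smul_of_mul_eq_zero [CommSemiring R] [Semiring A] [Algebra R A]
    {c d : ι → A} (h : ∀ i j, i ≠ j → c i * d j = 0) (u v : ι → R) :
    (∑ i, u i • c i) * (∑ j, v j • d j) = ∑ j, (u j * v j) • (c j * d j) := by
  rw [sum_mul_sum]
  refine sum_congr rfl fun i _ => ?_
  rw [sum_eq_single i (fun j _ hji => by rw [smul_mul_smul_comm, h i j hji.symm, smul_zero])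
    (by simp)]
  exact smul_mul_smul_comm ..

theorem one_sub_sum_smul_mul_one_sub_sum_smul [CommRing R] [Ring A] [Algebra R A] {q : ι → A}
    (hidem : ∀ j, q j * q j = q j) (horth : ∀ i j, i ≠ j → q i * q j = 0) (c d : ι → R) :
    (1 - ∑ j, c j • q j) * (1 - ∑ j, d j • q j) = 1 - ∑ j, (c j + d j - c j * d j) • q j := by
  rw [sub_mul, mul_sub, mul_sub, one_mul, mul_one, one_mul,
    sum_smul_mul_sum_smul_of_mul_eq_zero horth]
  simp only [hidem, add_smul, sub_smul, sum_add_distrib, sum_sub_distrib]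
  abel

theorem isSelfAdjoint_one_sub_sum_ofReal_smul [CStarAlgebra A] {q : ι → A}
    (hq : ∀ j, IsSelfAdjoint (q j)) (r : ι → ℝ) :
    IsSelfAdjoint (1 - ∑ j, (r j : ℂ) • q j) :=
  .sub (.one A) <| isSelfAdjoint_sum _ fun j _ =>
    IsSelfAdjoint.smul (Complex.conj_ofReal (r j)) (hq j)

theorem CFC.sqrt_one_sub_sum_ofReal_smul [CStarAlgebra A] [PartialOrder A] [StarOrderedRing A]
    {q : ι → A} (hq : ∀ j, IsStarProjection (q j)) (horth : ∀ i j, i ≠ j → q i * q j = 0)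
    (t : ι → ℝ) (ht : ∀ j, t j ≤ 1) :
    CFC.sqrt (1 - ∑ j, (t j : ℂ) • q j) = 1 - ∑ j, ((1 - √(1 - t j) : ℝ) : ℂ) • q j := by
  have hidem j : q j * q j = q j := (hq j).isIdempotentElem
  have hmul (r : ι → ℝ) :
      (1 - ∑ j, (r j : ℂ) • q j) * (1 - ∑ j, (r j : ℂ) • q j)
        = 1 - ∑ j, ((1 - (1 - r j) ^ 2 : ℝ) : ℂ) • q j := by
    rw [one_sub_sum_smul_mul_one_sub_sum_smul hidem horth]
    congr! 3 with j
    push_cast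
    ring
  refine CFC.sqrt_unique ?_ ?_
  · rw [hmul]
    congr! 5 with j
    rw [sub_sub_cancel, Real.sq_sqrt (sub_nonneg.2 (ht j)), sub_sub_cancel]
  -- `1 - ∑ (1 - s_j) • q_j` is the square of the self-adjoint `1 - ∑ (1 - √s_j) • q_j`
  · have hc := isSelfAdjoint_one_sub_sum_ofReal_smul (fun j => (hq j).isSelfAdjoint)
      (fun j => 1 - √(√(1 - t j)))
    have hsq j : (1 - (1 - (1 - √(√(1 - t j)))) ^ 2 : ℝ) = 1 - √(1 - t j) := by
      rw [sub_sub_cancel, Real.sq_sqrt (Real.sqrt_nonneg _)]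
    have := star_mul_self_nonneg (1 - ∑ j, ((1 - √(√(1 - t j)) : ℝ) : ℂ) • q j)
    rw [hc.star_eq, hmul] at this
    simpa only [hsq] using this

namespace IsOrthogonalPartialIsometries

variable [Ring A] [StarRing A] {e : ι → A}

theorem one_sub_sum_smul_mul_star_mul_sum_smul [CommRing R] [Algebra R A]
    (he : IsOrthogonalPartialIsometries e) (r c : ι → R) :
    (1 - ∑ j, r j • (e j * star (e j))) * ∑ j, c j • e j = ∑ j, ((1 - r j) * c j) • e j := by
  rw [sub_mul, one_mul, sum_smul_mul_sum_smul_of_mul_eq_zero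
    (fun i j hij => by rw [mul_assoc, he.star_mul_eq_zero i j hij, mul_zero])]
  simp only [he.mul_star_mul_self, sub_mul, one_mul, sub_smul, sum_sub_distrib]

theorem sum_smul_mul_one_sub_sum_smul_star_mul [CommRing R] [Algebra R A]
    (he : IsOrthogonalPartialIsometries e) (c r : ι → R) :
    (∑ j, c j • e j) * (1 - ∑ j, r j • (star (e j) * e j)) = ∑ j, (c j * (1 - r j)) • e j := by
  rw [mul_sub, mul_one, sum_smul_mul_sum_smul_of_mul_eq_zero
    (fun i j hij => by rw [← mul_assoc, he.mul_star_eq_zero i j hij, zero_mul])]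
  simp only [← mul_assoc, he.mul_star_mul_self, mul_sub, mul_one, sub_smul, sum_sub_distrib]

variable [CommRing R] [StarRing R] [Algebra R A] [StarModule R A]

theorem sum_smul_mul_star_sum_smul (he : IsOrthogonalPartialIsometries e) (c d : ι → R) :
    (∑ j, c j • e j) * star (∑ j, d j • e j) = ∑ j, (c j * star (d j)) • (e j * star (e j)) := by
  simp only [star_sum, star_smul]
  exact sum_smul_mul_sum_smul_of_mul_eq_zero he.mul_star_eq_zero _ _

theorem star_sum_smul_mul_sum_smul (he : IsOrthogonalPartialIsometries e) (c d : ι → R) :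
    star (∑ j, c j • e j) * (∑ j, d j • e j) = ∑ j, (star (c j) * d j) • (star (e j) * e j) := by
  simp only [star_sum, star_smul]
  exact sum_smul_mul_sum_smul_of_mul_eq_zero he.star_mul_eq_zero _ _

theorem sum_smul_mul_star_sum_smul_mul_sum_smul (he : IsOrthogonalPartialIsometries e)
    (c d f : ι → R) :
    (∑ j, c j • e j) * star (∑ j, d j • e j) * (∑ j, f j • e j)
      = ∑ j, (c j * star (d j) * f j) • e j := by
  rw [he.sum_smul_mul_star_sum_smul, sum_smul_mul_sum_smul_of_mul_eq_zero
    (fun i j hij => by rw [mul_assoc, he.star_mul_eq_zero i j hij, mul_zero])]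
  simp only [he.mul_star_mul_self]

end IsOrthogonalPartialIsometries

end FiniteSums

end

/-- Example 6.6 of the paper (computation of the Möbius transformation `g_a` on joint
eigenvectors, for a unital C*-algebra): for mutually orthogonal partial isometries
`e₁, …, e_p`, with `a = Σ α_j e_j`, `x = Σ β_j e_j` and `w = Σ (β_j/(1+α_j β_j)) e_j`,
one has (i) `(id + x □ a)(w) = x` and
(ii) `a + (1 − a a*)^{1/2} w (1 − a* a)^{1/2} = Σ ((α_j + β_j)/(1 + α_j β_j)) e_j`;
consequently `g_a(x) = Σ 𝔤_{α_j}(β_j) e_j`. -/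
theorem stmt16 {A : Type*} [CStarAlgebra A] [PartialOrder A] [StarOrderedRing A]
    (p : ℕ) (e : Fin p → A)
    (htri : ∀ j, e j * star (e j) * e j = e j)
    (horth : ∀ i j, i ≠ j → e i * star (e j) = 0 ∧ star (e i) * e j = 0)
    (α : Fin p → ℝ) (hα0 : ∀ j, 0 ≤ α j) (hα1 : ∀ j, α j < 1)
    (β : Fin p → ℂ) (hβ : ∀ j, ‖β j‖ < 1)
    (a x w : A)
    (ha : a = ∑ j, ((α j : ℂ)) • e j)
    (hx : x = ∑ j, β j • e j)
    (hw : w = ∑ j, (β j / (1 + (α j : ℂ) * β j)) • e j) :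
    (w + (2 : ℂ)⁻¹ • (x * star a * w + w * star a * x) = x)
    ∧ (a + CFC.sqrt (1 - a * star a) * w * CFC.sqrt (1 - star a * a)
        = ∑ j, (((α j : ℂ) + β j) / (1 + (α j : ℂ) * β j)) • e j) := by
  have he : IsOrthogonalPartialIsometries e :=
    ⟨htri, fun i j h => (horth i j h).1, fun i j h => (horth i j h).2⟩
  have hden j : 1 + (α j : ℂ) * β j ≠ 0 :=
    one_add_mul_ne_zero_of_norm_le_one_of_norm_lt_one
      (by simpa [abs_of_nonneg (hα0 j)] using (hα1 j).le) (hβ j)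
  have hα2 j : (α j : ℂ) * star (α j : ℂ) = ((α j ^ 2 : ℝ) : ℂ) := by simp [sq]
  have hα2' j : star (α j : ℂ) * (α j : ℂ) = ((α j ^ 2 : ℝ) : ℂ) := by simp [sq]
  have hαle j : α j ^ 2 ≤ 1 := by nlinarith [hα0 j, hα1 j]
  subst ha hx hw
  constructor
  · rw [he.sum_smul_mul_star_sum_smul_mul_sum_smul, he.sum_smul_mul_star_sum_smul_mul_sum_smul,
      ← sum_add_distrib, smul_sum, ← sum_add_distrib]
    refine sum_congr rfl fun j _ => ?_
    rw [← add_smul, smul_smul, ← add_smul, Complex.star_def, Complex.conj_ofReal]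
    congr 1
    linear_combination β j * mul_inv_cancel₀ (hden j)
  · rw [he.sum_smul_mul_star_sum_smul, he.star_sum_smul_mul_sum_smul]
    simp only [hα2, hα2']
    rw [CFC.sqrt_one_sub_sum_ofReal_smul he.isStarProjection_mul_star
        (fun _ _ => he.mul_star_mul_mul_star_eq_zero) _ hαle,
      CFC.sqrt_one_sub_sum_ofReal_smul he.isStarProjection_star_mul
        (fun _ _ => he.star_mul_mul_star_mul_eq_zero) _ hαle,
      he.one_sub_sum_smul_mul_star_mul_sum_smul, he.sum_smul_mul_one_sub_sum_smul_star_mul,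
      ← sum_add_distrib]
    refine sum_congr rfl fun j _ => ?_
    rw [← add_smul]
    congr 1
    have hs : ((√(1 - α j ^ 2) : ℝ) : ℂ) ^ 2 = 1 - (α j : ℂ) ^ 2 := by
      rw [← Complex.ofReal_pow, Real.sq_sqrt (sub_nonneg.2 (hαle j))]; push_cast; ring
    push_cast
    field_simp [hden j]
    linear_combination β j * hs
end
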